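/- arXiv:2601.20020 — 7 statements merged into one kernel-verified Lean document; each statement's English description precedes it below -/
import Mathlib

section
/- Consider the standard edgelighter walk on n vertices with the initial walker position uniform on V, and for a fixed pair {u,v} of distinct vertices and t ≥ 1 let 𝔭_{t,u,v} = P({u,v} ≠ {L_s, L_{s+1}} for all 0 ≤ s ≤ t−1), i.e., the probability that the pair {u,v} has not been traversed by the walker by time t. Then (1 − 1/binom(n,2))^t ≤ 𝔭_{t,u,v} ≤ (1 − 1/(binom(n,2) + n))^{⌊(t+1)/2⌋}. -/
open scoped BigOperators
open scoped Classical
open Finset Matrix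

/-- The walker path determined by the start `l0` and `t` subsequent choices. -/
def walkSeq {n : ℕ} (t : ℕ) (l0 : Fin n) (f : Fin t → Fin n) : ℕ → Fin n :=
  fun i => if h : 0 < i ∧ i ≤ t then f ⟨i - 1, by omega⟩ else l0

/-- Probability, for the walk started at `l0` (each step uniform on the vertices),
that some unordered pair of distinct vertices has not been traversed within the
first `t` steps. -/
noncomputable def coverSurvival (n t : ℕ) (l0 : Fin n) : ℝ :=
  ((Finset.univ.filter fun f : Fin t → Fin n =>
      ∃ u v : Fin n, u ≠ v ∧ ∀ ℓ < t,
        s(walkSeq t l0 f ℓ, walkSeq t l0 f (ℓ + 1)) ≠ s(u, v)).card : ℝ) / (n : ℝ) ^ t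

/-- Expected cover time `E_{l0}[τ⁽ᵘ⁾_cover]`, via `E[τ] = ∑_{t ≥ 0} P(τ > t)`. -/
noncomputable def expCoverTime (n : ℕ) (l0 : Fin n) : ℝ := ∑' t : ℕ, coverSurvival n t l0

/-- `t⁽ᵘ⁾_cover`: maximum over starting states of the expected cover time. -/
noncomputable def maxExpCoverTime (n : ℕ) : ℝ := ⨆ l0 : Fin n, expCoverTime n l0
/-- Probability that the pair `{u,v}` has not been traversed by the walker within the
first `t` steps, for the walk whose initial position is uniform on the vertices. -/
noncomputable def travProb (n t : ℕ) (u v : Fin n) : ℝ :=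
  ((Finset.univ.filter fun g : Fin n × (Fin t → Fin n) =>
      ∀ ℓ < t, s(walkSeq t g.1 g.2 ℓ, walkSeq t g.1 g.2 (ℓ + 1)) ≠ s(u, v)).card : ℝ)
    / (n : ℝ) ^ (t + 1)

/-!
Let `a t w` count the pairs (start, steps) whose walk avoids `{u, v}` and ends at `w`. Appending a
step to `w` after a walk ending at `e` is forbidden exactly when `s(e, w) = s(u, v)`, so the total
`b t = ∑ w, a t w` and `D t = a t u + a t v` satisfy `b (t + 1) = n b t - D t` and
`D (t + 1) = 2 b t - D t`. These preserve `n D ≤ 2 b ≤ (n + 1) D`, which pins the growth factor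
`b (t + 1) / b t` between `n - 2 / (n - 1)` and `n - 2 / (n + 1)`; dividing by `n ^ (t + 1)` gives
the two bounds, the upper one even with exponent `t ≥ (t + 1) / 2`.
-/

section Recurrence

variable {c : ℝ} {b D : ℕ → ℝ}

lemma recurrence_invariant (hc : 2 ≤ c) (hb : ∀ t, b (t + 1) = c * b t - D t)
    (hD : ∀ t, D (t + 1) = 2 * b t - D t) (h0 : c * D 0 ≤ 2 * b 0 ∧ 2 * b 0 ≤ (c + 1) * D 0)
    (t : ℕ) : c * D t ≤ 2 * b t ∧ 2 * b t ≤ (c + 1) * D t := by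
  induction t with
  | zero => exact h0
  | succ t ih =>
    obtain ⟨hlo, hhi⟩ := ih
    have hD0 : 0 ≤ D t := by linarith
    rw [hb, hD]
    constructor <;> nlinarith

lemma geom_bounds_of_recurrence (hc : 2 ≤ c) (hb : ∀ t, b (t + 1) = c * b t - D t)
    (hD : ∀ t, D (t + 1) = 2 * b t - D t) (h0 : c * D 0 ≤ 2 * b 0 ∧ 2 * b 0 ≤ (c + 1) * D 0)
    (t : ℕ) : (c - 2 / (c - 1)) ^ t * b 0 ≤ b t ∧ b t ≤ (c - 2 / (c + 1)) ^ t * b 0 := by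
  have hinv := recurrence_invariant hc hb hD h0
  constructor
  · have hr : 2 / (c - 1) ≤ c := (div_le_self zero_le_two (by linarith)).trans hc
    refine geom_le (by linarith) t fun k _ => ?_
    have hDk : D k ≤ 2 * b k / (c - 1) := by
      rw [le_div_iff₀ (by linarith)]
      nlinarith [hinv k]
    rw [hb, sub_mul, div_mul_eq_mul_div]
    linarith
  · have hr : 2 / (c + 1) ≤ c := (div_le_self zero_le_two (by linarith)).trans hc
    refine le_geom (by linarith) t fun k _ => ?_
    have hDk : 2 * b k / (c + 1) ≤ D k := by
      rw [div_le_iff₀ (by linarith)]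
      linarith [hinv k]
    rw [hb, sub_mul, div_mul_eq_mul_div]
    linarith

end Recurrence

lemma sum_filter_sym2_ne_add {α M : Type*} [Fintype α] [DecidableEq α] [AddCommMonoid M]
    {u v : α} (huv : u ≠ v) (f : α → M) (w : α) :
    ∑ e with s(e, w) ≠ s(u, v), f e + ((if w = v then f u else 0) + if w = u then f v else 0)
      = ∑ e, f e := by
  rw [← sum_filter_add_sum_filter_not univ (fun e => s(e, w) ≠ s(u, v))]
  congr 1
  simp only [not_not, Sym2.eq_iff, sum_filter]
  by_cases hwv : w = v <;> by_cases hwu : w = u <;> simp_all [eq_comm]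

section Counting

variable {n : ℕ} (u v : Fin n)

lemma walkSeq_snoc_of_le {t : ℕ} (l : Fin n) (f : Fin t → Fin n) (w : Fin n) {i : ℕ}
    (hi : i ≤ t) : walkSeq (t + 1) l (Fin.snoc f w) i = walkSeq t l f i := by
  unfold walkSeq
  rcases Nat.eq_zero_or_pos i with rfl | hpos
  · simp
  · rw [dif_pos ⟨hpos, by omega⟩, dif_pos ⟨hpos, hi⟩]
    exact Fin.snoc_castSucc (α := fun _ => Fin n) _ _ ⟨i - 1, by omega⟩

lemma walkSeq_snoc_last {t : ℕ} (l : Fin n) (f : Fin t → Fin n) (w : Fin n) :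
    walkSeq (t + 1) l (Fin.snoc f w) (t + 1) = w := by
  unfold walkSeq
  rw [dif_pos ⟨by omega, le_rfl⟩]
  exact Fin.snoc_last (α := fun _ => Fin n) _ _

def Avoids (t : ℕ) (g : Fin n × (Fin t → Fin n)) : Prop :=
  ∀ ℓ < t, s(walkSeq t g.1 g.2 ℓ, walkSeq t g.1 g.2 (ℓ + 1)) ≠ s(u, v)

lemma avoids_snoc {t : ℕ} (l : Fin n) (f : Fin t → Fin n) (w : Fin n) :
    Avoids u v (t + 1) (l, Fin.snoc f w) ↔
      Avoids u v t (l, f) ∧ s(walkSeq t l f t, w) ≠ s(u, v) := by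
  simp only [Avoids, Nat.forall_lt_succ_right]
  rw [walkSeq_snoc_of_le l f w le_rfl, walkSeq_snoc_last]
  refine and_congr_left' (forall₂_congr fun ℓ hℓ => ?_)
  rw [walkSeq_snoc_of_le l f w hℓ.le, walkSeq_snoc_of_le l f w hℓ]

noncomputable def avoidCount (t : ℕ) : ℕ :=
  #{g : Fin n × (Fin t → Fin n) | Avoids u v t g}

noncomputable def endCount (t : ℕ) (w : Fin n) : ℕ :=
  #{g : Fin n × (Fin t → Fin n) | Avoids u v t g ∧ walkSeq t g.1 g.2 t = w}

lemma travProb_eq_avoidCount_div (t : ℕ) :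
    travProb n t u v = avoidCount u v t / (n : ℝ) ^ (t + 1) := by
  unfold travProb avoidCount Avoids
  congr

lemma avoidCount_eq_sum_endCount (t : ℕ) : avoidCount u v t = ∑ w, endCount u v t w := by
  rw [avoidCount, card_eq_sum_card_fiberwise (f := fun g => walkSeq t g.1 g.2 t) (t := univ)
    (fun _ _ => mem_univ _)]
  simp only [endCount, filter_filter]

lemma endCount_zero (w : Fin n) : endCount u v 0 w = 1 := by
  rw [endCount, card_eq_one]
  refine ⟨(w, Fin.elim0), ?_⟩
  ext ⟨l, f⟩
  simp [Avoids, walkSeq, Prod.ext_iff, funext_iff]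

lemma endCount_succ (t : ℕ) (w : Fin n) :
    endCount u v (t + 1) w = ∑ e with s(e, w) ≠ s(u, v), endCount u v t e := by
  have hsnoc : endCount u v (t + 1) w =
      #{g : Fin n × (Fin t → Fin n) | Avoids u v t g ∧ s(walkSeq t g.1 g.2 t, w) ≠ s(u, v)} := by
    refine card_nbij' (fun q => (q.1, Fin.init q.2)) (fun g => (g.1, Fin.snoc g.2 w))
      ?_ ?_ ?_ ?_
    · rintro ⟨l, f⟩ hq
      simp only [coe_filter, Set.mem_ofPred_eq, mem_univ, true_and] at hq ⊢
      rw [← Fin.snoc_init_self f, avoids_snoc, walkSeq_snoc_last] at hq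
      exact ⟨hq.1.1, hq.2 ▸ hq.1.2⟩
    · rintro ⟨l, f⟩ hg
      simp only [coe_filter, Set.mem_ofPred_eq, mem_univ, true_and] at hg ⊢
      exact ⟨(avoids_snoc u v l f w).2 hg, walkSeq_snoc_last l f w⟩
    · rintro ⟨l, f⟩ hq
      simp only [coe_filter, Set.mem_ofPred_eq, mem_univ, true_and] at hq ⊢
      rw [← hq.2, ← Fin.snoc_init_self f, walkSeq_snoc_last, Fin.init_snoc]
    · rintro ⟨l, f⟩ -
      simp
  rw [hsnoc, card_eq_sum_card_fiberwise (f := fun g => walkSeq t g.1 g.2 t) (t := univ)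
    (fun _ _ => mem_univ _), sum_filter]
  refine sum_congr rfl fun e _ => ?_
  split_ifs with he
  · simp only [endCount, filter_filter]
    congr 1
    ext g
    simp only [mem_filter, mem_univ, true_and]
    grind
  · refine card_eq_zero.2 (filter_eq_empty_iff.2 ?_)
    grind

variable {u v}

lemma endCount_succ_add (huv : u ≠ v) (t : ℕ) (w : Fin n) :
    endCount u v (t + 1) w + ((if w = v then endCount u v t u else 0) +
      if w = u then endCount u v t v else 0) = avoidCount u v t := by
  rw [endCount_succ, avoidCount_eq_sum_endCount]
  exact sum_filter_sym2_ne_add huv _ w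

lemma avoidCount_succ_add (huv : u ≠ v) (t : ℕ) :
    avoidCount u v (t + 1) + (endCount u v t u + endCount u v t v) = n * avoidCount u v t := by
  have h := sum_congr rfl fun w (_ : w ∈ univ) => endCount_succ_add huv t w
  rw [sum_add_distrib, sum_add_distrib, sum_ite_eq', sum_ite_eq', ← avoidCount_eq_sum_endCount] at h
  simpa using h

lemma endCount_pair_succ_add (huv : u ≠ v) (t : ℕ) :
    endCount u v (t + 1) u + endCount u v (t + 1) v + (endCount u v t u + endCount u v t v)
      = 2 * avoidCount u v t := by
  have hu := endCount_succ_add huv t u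
  have hv := endCount_succ_add huv t v
  simp only [huv, huv.symm, if_true, if_false] at hu hv
  omega

end Counting

lemma sub_two_div_sub_one_eq {n : ℕ} (hn : 2 ≤ n) :
    (n : ℝ) - 2 / (n - 1) = (1 - 1 / (n.choose 2 : ℝ)) * n := by
  have h : (n : ℝ) - 1 ≠ 0 := by
    rw [sub_ne_zero]; exact_mod_cast (by omega : n ≠ 1)
  have h0 : (n : ℝ) ≠ 0 := by exact_mod_cast (by omega : n ≠ 0)
  rw [Nat.cast_choose_two]
  field_simp

lemma sub_two_div_add_one_eq {n : ℕ} (hn : n ≠ 0) :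
    (n : ℝ) - 2 / (n + 1) = (1 - 1 / ((n.choose 2 : ℝ) + n)) * n := by
  have h0 : (n : ℝ) ≠ 0 := by exact_mod_cast hn
  have h1 : (n : ℝ) + 1 ≠ 0 := by positivity
  rw [Nat.cast_choose_two, show (n : ℝ) * (n - 1) / 2 + n = n * (n + 1) / 2 by ring]
  field_simp

lemma travProb_pow_bounds {n : ℕ} (hn : 2 ≤ n) {u v : Fin n} (huv : u ≠ v) (t : ℕ) :
    ((1 : ℝ) - 1 / (n.choose 2 : ℝ)) ^ t ≤ travProb n t u v ∧
      travProb n t u v ≤ ((1 : ℝ) - 1 / ((n.choose 2 : ℝ) + n)) ^ t := by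
  have hc : (2 : ℝ) ≤ n := by exact_mod_cast hn
  have hb0 : avoidCount u v 0 = n := by simp [avoidCount_eq_sum_endCount, endCount_zero]
  obtain ⟨hlo, hhi⟩ := geom_bounds_of_recurrence (c := n)
    (b := fun t => (avoidCount u v t : ℝ)) (D := fun t => (endCount u v t u + endCount u v t v : ℝ))
    hc (fun t => by
      have h := congrArg (Nat.cast : ℕ → ℝ) (avoidCount_succ_add huv t)
      push_cast at h
      linarith)
    (fun t => by
      have h := congrArg (Nat.cast : ℕ → ℝ) (endCount_pair_succ_add huv t)
      push_cast at h
      linarith)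
    (by simp only [endCount_zero, hb0]; push_cast; constructor <;> linarith) t
  simp only [hb0] at hlo hhi
  rw [sub_two_div_sub_one_eq hn, mul_pow, mul_assoc, ← pow_succ] at hlo
  rw [sub_two_div_add_one_eq (by omega), mul_pow, mul_assoc, ← pow_succ] at hhi
  have hpow : (0 : ℝ) < (n : ℝ) ^ (t + 1) := by positivity
  rw [travProb_eq_avoidCount_div, le_div_iff₀ hpow, div_le_iff₀ hpow]
  exact ⟨hlo, hhi⟩

theorem travProb_bounds_general (n : ℕ) (hn : 2 ≤ n) (t : ℕ)
    (u v : Fin n) (huv : u ≠ v) :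
    ((1 : ℝ) - 1 / (n.choose 2 : ℝ)) ^ t ≤ travProb n t u v ∧
      travProb n t u v ≤ ((1 : ℝ) - 1 / ((n.choose 2 : ℝ) + n)) ^ ((t + 1) / 2) := by
  obtain ⟨hlo, hhi⟩ := travProb_pow_bounds hn huv t
  refine ⟨hlo, hhi.trans (pow_le_pow_of_le_one ?_ ?_ (by omega))⟩
  · have hc : (2 : ℝ) ≤ n := by exact_mod_cast hn
    rw [sub_nonneg, div_le_one (by positivity)]
    linarith [(Nat.cast_nonneg (n.choose 2) : (0 : ℝ) ≤ _)]
  · exact sub_le_self _ (by positivity)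

/-- Bounds on the probability `𝔭_{t,u,v}` that a fixed pair of distinct
vertices has not been traversed by the edgelighter by time `t`. -/
theorem travProb_bounds (n : ℕ) (hn : 2 ≤ n) (t : ℕ) (ht : 1 ≤ t)
    (u v : Fin n) (huv : u ≠ v) :
    ((1 : ℝ) - 1 / (n.choose 2 : ℝ)) ^ t ≤ travProb n t u v ∧
      travProb n t u v ≤ ((1 : ℝ) - 1 / ((n.choose 2 : ℝ) + n)) ^ ((t + 1) / 2) :=
  travProb_bounds_general n hn t u v huv
end

section
/- Consider the standard edgelighter walk on n vertices with n > 3 and the initial walker position uniform on V, and for a fixed pair {u,v} of distinct vertices and t ≥ 1 let 𝔭_{t,u,v} = P({u,v} ≠ {L_s, L_{s+1}} for all 0 ≤ s ≤ t−1). Then 𝔭_{t,u,v} ≤ exp(−⌊(t+1)/2⌋/(binom(n,2) + n)) and 𝔭_{t,u,v} ≥ exp(−t/(binom(n,2) − 1)); in particular 𝔭_{t,u,v} = exp(−Θ(t/n²)). -/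
open scoped BigOperators
open scoped Classical
open Finset Matrix

/-!
Let `a t` count the vertex sequences `L₀, …, L_t` none of whose steps traverses `{u, v}`, and
`x t` those among them ending at `u`; swapping `u` and `v` shows that as many end at `v`.
Appending a step gives `a (t+1) = n a t - 2 x t` and `x (t+1) = a t - x t`, and by induction
`(n - 1) x t ≤ a t ≤ (n + 1) x t`. Hence `a (t+1) / a t` lies between `n (1 - 1 / C(n,2))` and
`n (1 - 1 / (C(n,2) + n))`, so `𝔭_{t,u,v} = a t / n ^ (t+1)` lies between `(1 - 1 / C(n,2)) ^ t`
and `(1 - 1 / (C(n,2) + n)) ^ t`; the inequalities `1 - y ≤ exp (-y)` and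
`exp (-1 / (M - 1)) ≤ 1 - 1 / M` turn these into the exponential bounds.
-/

section RelChains

variable {α : Type*} [Fintype α]

noncomputable def relChains (R : α → α → Prop) (t : ℕ) : Finset (Fin (t + 1) → α) :=
  univ.filter fun p => ∀ i : Fin t, R (p i.castSucc) (p i.succ)

noncomputable def relChainsTo (R : α → α → Prop) (t : ℕ) (w : α) :
    Finset (Fin (t + 1) → α) :=
  (relChains R t).filter fun p => p (Fin.last t) = w

variable {R : α → α → Prop}

lemma mem_relChains {t : ℕ} {p : Fin (t + 1) → α} :
    p ∈ relChains R t ↔ ∀ i : Fin t, R (p i.castSucc) (p i.succ) := by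
  simp only [relChains, mem_filter, mem_univ, true_and]

lemma mem_relChainsTo {t : ℕ} {w : α} {p : Fin (t + 1) → α} :
    p ∈ relChainsTo R t w ↔ p ∈ relChains R t ∧ p (Fin.last t) = w :=
  mem_filter

lemma card_relChains_zero : #(relChains R 0) = Fintype.card α := by
  simp [relChains]

lemma card_relChainsTo_zero (w : α) : #(relChainsTo R 0 w) = 1 := by
  rw [card_eq_one]
  exact ⟨fun _ => w, by ext p; simp [relChainsTo, relChains, funext_iff, Fin.forall_fin_one]⟩

lemma card_relChains_eq_sum_card_relChainsTo (t : ℕ) :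
    #(relChains R t) = ∑ w, #(relChainsTo R t w) :=
  card_eq_sum_card_fiberwise fun _ _ => mem_univ _

lemma card_relChainsTo_succ (t : ℕ) (w : α) :
    #(relChainsTo R (t + 1) w) = #((relChains R t).filter fun q => R (q (Fin.last t)) w) := by
  refine card_nbij' Fin.init (Fin.snoc · w) ?_ ?_ ?_ ?_
  · intro p hp
    simp only [mem_coe, mem_relChainsTo, mem_relChains, mem_filter] at hp ⊢
    obtain ⟨hp, rfl⟩ := hp
    refine ⟨fun i => ?_, ?_⟩
    · simpa [Fin.init] using hp i.castSucc
    · simpa [Fin.init] using hp (Fin.last t)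
  · intro q hq
    simp only [mem_coe, mem_relChainsTo, mem_relChains, mem_filter] at hq ⊢
    refine ⟨Fin.lastCases ?_ (fun i => ?_), by simp⟩
    · simpa using hq.2
    · rw [Fin.succ_castSucc, Fin.snoc_castSucc, Fin.snoc_castSucc]
      exact hq.1 i
  · intro p hp
    simp only [mem_coe, mem_relChainsTo] at hp
    simp [← hp.2]
  · intro q _
    simp

lemma card_relChainsTo_equiv (σ : α ≃ α) (hσ : ∀ a b, R (σ a) (σ b) ↔ R a b) (t : ℕ)
    (w : α) :
    #(relChainsTo R t (σ w)) = #(relChainsTo R t w) := by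
  refine (card_nbij' (σ ∘ ·) (σ.symm ∘ ·) ?_ ?_ ?_ ?_).symm
  · intro p hp
    simp_all [mem_relChainsTo, mem_relChains]
  · intro p hp
    simp only [mem_coe, mem_relChainsTo, mem_relChains] at hp ⊢
    refine ⟨fun i => ?_, by simp [hp.2]⟩
    rw [← hσ]
    simpa using hp.1 i
  · intro p _
    simp [Function.comp_def]
  · intro p _
    simp [Function.comp_def]

end RelChains

section StepAvoids

variable {α : Type*} {u v : α}

def StepAvoids (e : Sym2 α) (a b : α) : Prop := s(a, b) ≠ e

lemma stepAvoids_swap (a b : α) :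
    StepAvoids s(u, v) (Equiv.swap u v a) (Equiv.swap u v b) ↔ StepAvoids s(u, v) a b := by
  have hfix : Sym2.map (Equiv.swap u v) s(u, v) = s(u, v) := by simp [Sym2.eq_swap]
  rw [StepAvoids, StepAvoids, ← Sym2.map_mk]
  exact (Sym2.map.injective (Equiv.swap u v).injective).ne_iff' hfix

variable [Fintype α]

lemma card_relChainsTo_stepAvoids_left_eq_right (t : ℕ) :
    #(relChainsTo (StepAvoids s(u, v)) t u) = #(relChainsTo (StepAvoids s(u, v)) t v) := by
  simpa using card_relChainsTo_equiv (Equiv.swap u v) stepAvoids_swap t v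

lemma card_filter_not_stepAvoids {R : α → α → Prop} (huv : u ≠ v) (t : ℕ) (w : α) :
    #((relChains R t).filter fun q => ¬StepAvoids s(u, v) (q (Fin.last t)) w) =
      (if w = u then #(relChainsTo R t v) else 0) +
        (if w = v then #(relChainsTo R t u) else 0) := by
  simp only [StepAvoids, not_not, relChainsTo]
  by_cases hwu : w = u
  · rw [if_pos hwu, if_neg (hwu ▸ huv), add_zero]
    congr 1
    refine filter_congr fun q _ => ?_
    simp [hwu, huv]
  · by_cases hwv : w = v
    · rw [if_neg hwu, if_pos hwv, zero_add]
      congr 1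
      refine filter_congr fun q _ => ?_
      simp [hwv, huv.symm]
    · rw [if_neg hwu, if_neg hwv, card_eq_zero, filter_eq_empty_iff]
      intro q _ h
      rcases Sym2.eq_iff.1 h with ⟨_, h⟩ | ⟨_, h⟩
      exacts [hwv h, hwu h]

lemma card_relChainsTo_stepAvoids_succ_add (huv : u ≠ v) (t : ℕ) (w : α) :
    #(relChainsTo (StepAvoids s(u, v)) (t + 1) w) +
        ((if w = u then #(relChainsTo (StepAvoids s(u, v)) t v) else 0) +
          (if w = v then #(relChainsTo (StepAvoids s(u, v)) t u) else 0)) =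
      #(relChains (StepAvoids s(u, v)) t) := by
  rw [card_relChainsTo_succ, ← card_filter_not_stepAvoids huv, card_filter_add_card_filter_not]

lemma card_relChainsTo_stepAvoids_succ (huv : u ≠ v) (t : ℕ) :
    #(relChainsTo (StepAvoids s(u, v)) (t + 1) u) + #(relChainsTo (StepAvoids s(u, v)) t u) =
      #(relChains (StepAvoids s(u, v)) t) := by
  have h := card_relChainsTo_stepAvoids_succ_add huv t u
  rwa [if_pos rfl, if_neg huv, add_zero, ← card_relChainsTo_stepAvoids_left_eq_right] at h

lemma card_relChains_stepAvoids_succ (huv : u ≠ v) (t : ℕ) :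
    #(relChains (StepAvoids s(u, v)) (t + 1)) + 2 * #(relChainsTo (StepAvoids s(u, v)) t u) =
      Fintype.card α * #(relChains (StepAvoids s(u, v)) t) := by
  have hsum := sum_congr rfl fun w (_ : w ∈ univ) => card_relChainsTo_stepAvoids_succ_add huv t w
  simp only [sum_add_distrib, sum_ite_eq', mem_univ, if_true, sum_const, card_univ,
    smul_eq_mul, ← card_relChains_eq_sum_card_relChainsTo] at hsum
  rw [← hsum, card_relChainsTo_stepAvoids_left_eq_right]
  ring

end StepAvoids

section Recurrence

variable {a x : ℕ → ℝ} {n : ℝ}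

lemma sub_one_mul_le_of_recurrence (ha : ∀ t, a (t + 1) + 2 * x t = n * a t)
    (hx : ∀ t, x (t + 1) + x t = a t) (hn : 3 ≤ n) (hx_nonneg : ∀ t, 0 ≤ x t)
    (h₀ : (n - 1) * x 0 ≤ a 0) (t : ℕ) : (n - 1) * x t ≤ a t := by
  induction t with
  | zero => exact h₀
  | succ t ih => nlinarith [ha t, hx t, hx_nonneg t, mul_nonneg (sub_nonneg.2 hn) (hx_nonneg t)]

lemma le_add_one_mul_of_recurrence (ha : ∀ t, a (t + 1) + 2 * x t = n * a t)
    (hx : ∀ t, x (t + 1) + x t = a t) (hlo : ∀ t, (n - 1) * x t ≤ a t)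
    (h₀ : a 0 ≤ (n + 1) * x 0) : ∀ t, a t ≤ (n + 1) * x t
  | 0 => h₀
  | t + 1 => by
    rw [show x (t + 1) = a t - x t by linarith [hx t]]
    linarith [ha t, hlo t]

lemma sub_div_mul_le_of_recurrence (ha : ∀ t, a (t + 1) + 2 * x t = n * a t) (hn : 1 < n)
    (hlo : ∀ t, (n - 1) * x t ≤ a t) (t : ℕ) : (n - 2 / (n - 1)) * a t ≤ a (t + 1) := by
  have h2x : 2 * x t ≤ 2 / (n - 1) * a t := by
    rw [div_mul_eq_mul_div, le_div_iff₀ (by linarith)]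
    linarith [hlo t]
  linarith [ha t]

lemma le_sub_div_mul_of_recurrence (ha : ∀ t, a (t + 1) + 2 * x t = n * a t) (hn : 0 < n)
    (hhi : ∀ t, a t ≤ (n + 1) * x t) (t : ℕ) : a (t + 1) ≤ (n - 2 / (n + 1)) * a t := by
  have h2x : 2 / (n + 1) * a t ≤ 2 * x t := by
    rw [div_mul_eq_mul_div, div_le_iff₀ (by linarith)]
    linarith [hhi t]
  linarith [ha t]

end Recurrence

lemma card_relChains_stepAvoids_geom_bounds {α : Type*} [Fintype α] {u v : α}
    (hα : 3 ≤ Fintype.card α) (huv : u ≠ v) (t : ℕ) :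
    (Fintype.card α - 2 / (Fintype.card α - 1) : ℝ) ^ t * Fintype.card α ≤
        #(relChains (StepAvoids s(u, v)) t) ∧
      (#(relChains (StepAvoids s(u, v)) t) : ℝ) ≤
        (Fintype.card α - 2 / (Fintype.card α + 1) : ℝ) ^ t * Fintype.card α := by
  set a : ℕ → ℝ := fun t => #(relChains (StepAvoids s(u, v)) t) with ha_def
  set x : ℕ → ℝ := fun t => #(relChainsTo (StepAvoids s(u, v)) t u) with hx_def
  have hn : (3 : ℝ) ≤ Fintype.card α := by exact_mod_cast hα
  have ha₀ : a 0 = Fintype.card α := by simp [a, card_relChains_zero]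
  have hx₀ : x 0 = 1 := by simp [x, card_relChainsTo_zero]
  have ha : ∀ t, a (t + 1) + 2 * x t = Fintype.card α * a t := fun t => by
    simp only [ha_def, hx_def]
    exact_mod_cast card_relChains_stepAvoids_succ huv t
  have hx : ∀ t, x (t + 1) + x t = a t := fun t => by
    simp only [ha_def, hx_def]
    exact_mod_cast card_relChainsTo_stepAvoids_succ huv t
  have hlo := sub_one_mul_le_of_recurrence ha hx hn (fun _ => by positivity)
    (by rw [ha₀, hx₀]; linarith)
  have hhi := le_add_one_mul_of_recurrence ha hx hlo (by rw [ha₀, hx₀]; linarith)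
  constructor
  · have hc : (0 : ℝ) ≤ Fintype.card α - 2 / (Fintype.card α - 1) := by
      rw [sub_nonneg, div_le_iff₀ (by linarith)]
      nlinarith
    simpa only [ha₀] using
      geom_le hc t fun k _ => sub_div_mul_le_of_recurrence ha (by linarith) hlo k
  · have hc : (0 : ℝ) ≤ Fintype.card α - 2 / (Fintype.card α + 1) := by
      rw [sub_nonneg, div_le_iff₀ (by linarith)]
      nlinarith
    simpa only [ha₀] using
      le_geom hc t fun k _ => le_sub_div_mul_of_recurrence ha (by linarith) hhi k

lemma one_sub_inv_pow_le_exp_neg_div {M : ℝ} (hM : 1 ≤ M) (t : ℕ) :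
    (1 - M⁻¹) ^ t ≤ Real.exp (-t / M) := by
  calc (1 - M⁻¹) ^ t ≤ Real.exp (-M⁻¹) ^ t :=
        pow_le_pow_left₀ (sub_nonneg.2 (inv_le_one_of_one_le₀ hM)) (Real.one_sub_le_exp_neg _) t
    _ = Real.exp (-t / M) := by rw [← Real.exp_nat_mul]; ring_nf

lemma exp_neg_div_le_one_sub_inv_pow {M : ℝ} (hM : 1 < M) (t : ℕ) :
    Real.exp (-t / (M - 1)) ≤ (1 - M⁻¹) ^ t := by
  have hstep : Real.exp (-(M - 1)⁻¹) ≤ 1 - M⁻¹ := by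
    have hM₀ : M ≠ 0 := by positivity
    have hM₁ : M - 1 ≠ 0 := by linarith
    calc Real.exp (-(M - 1)⁻¹) = (Real.exp (M - 1)⁻¹)⁻¹ := Real.exp_neg _
      _ ≤ ((M - 1)⁻¹ + 1)⁻¹ := inv_anti₀ (by positivity) (Real.add_one_le_exp _)
      _ = 1 - M⁻¹ := by grind
  calc Real.exp (-t / (M - 1)) = Real.exp (-(M - 1)⁻¹) ^ t := by
        rw [← Real.exp_nat_mul]; ring_nf
    _ ≤ (1 - M⁻¹) ^ t := pow_le_pow_left₀ (Real.exp_pos _).le hstep t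

lemma walkSeq_eq_cons {n t : ℕ} (l₀ : Fin n) (f : Fin t → Fin n) (j : Fin (t + 1)) :
    walkSeq t l₀ f j = (Fin.cons l₀ f : Fin (t + 1) → Fin n) j := by
  cases j using Fin.cases with
  | zero => simp [walkSeq]
  | succ i => simp [walkSeq]

lemma travProb_eq_card_relChains (n t : ℕ) (u v : Fin n) :
    travProb n t u v = #(relChains (StepAvoids s(u, v)) t) / (n : ℝ) ^ (t + 1) := by
  rw [travProb]
  congr 2
  have hmem (g : Fin n × (Fin t → Fin n)) :
      (∀ ℓ < t, s(walkSeq t g.1 g.2 ℓ, walkSeq t g.1 g.2 (ℓ + 1)) ≠ s(u, v)) ↔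
        Fin.cons g.1 g.2 ∈ relChains (StepAvoids s(u, v)) t := by
    simp only [mem_relChains, StepAvoids, ← walkSeq_eq_cons, Fin.val_castSucc, Fin.val_succ]
    exact ⟨fun h i => h i i.isLt, fun h ℓ hℓ => h ⟨ℓ, hℓ⟩⟩
  refine card_nbij' (fun g => Fin.cons g.1 g.2) (fun p => (p 0, Fin.tail p)) ?_ ?_ ?_ ?_
  · intro g hg
    exact (hmem g).1 (mem_filter.1 hg).2
  · intro p hp
    refine mem_filter.2 ⟨mem_univ _, (hmem _).2 ?_⟩
    simpa using hp
  · intro g _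
    simp
  · intro p _
    simp

lemma one_sub_inv_choose_pow_le_travProb {n : ℕ} (hn : 3 ≤ n) {u v : Fin n} (huv : u ≠ v)
    (t : ℕ) : (1 - (n.choose 2 : ℝ)⁻¹) ^ t ≤ travProb n t u v := by
  have h := (card_relChains_stepAvoids_geom_bounds (by simpa using hn) huv t).1
  rw [Fintype.card_fin] at h
  have hn₁ : (n : ℝ) - 1 ≠ 0 := by
    have : (3 : ℝ) ≤ n := by exact_mod_cast hn
    linarith
  have hratio : (n - 2 / (n - 1) : ℝ) = n * (1 - (n.choose 2 : ℝ)⁻¹) := by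
    rw [Nat.cast_choose_two]
    field_simp
  rw [travProb_eq_card_relChains, le_div_iff₀ (by positivity)]
  calc _ = (n - 2 / (n - 1) : ℝ) ^ t * n := by rw [hratio, mul_pow, pow_succ]; ring
    _ ≤ _ := h

lemma travProb_le_one_sub_inv_choose_add_pow {n : ℕ} (hn : 3 ≤ n) {u v : Fin n} (huv : u ≠ v)
    (t : ℕ) : travProb n t u v ≤ (1 - ((n.choose 2 : ℝ) + n)⁻¹) ^ t := by
  have h := (card_relChains_stepAvoids_geom_bounds (by simpa using hn) huv t).2
  rw [Fintype.card_fin] at h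
  have hn₁ : (n : ℝ) + 1 ≠ 0 := by positivity
  have hratio : (n - 2 / (n + 1) : ℝ) = n * (1 - ((n.choose 2 : ℝ) + n)⁻¹) := by
    rw [Nat.cast_choose_two, show (n * (n - 1) / 2 + n : ℝ) = n * (n + 1) / 2 by ring]
    field_simp
  rw [travProb_eq_card_relChains, div_le_iff₀ (by positivity)]
  calc _ ≤ (n - 2 / (n + 1) : ℝ) ^ t * n := h
    _ = _ := by rw [hratio, mul_pow, pow_succ]; ring

theorem travProb_exp_bounds_general (n : ℕ) (hn : 3 < n) (t : ℕ)
    (u v : Fin n) (huv : u ≠ v) :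
    travProb n t u v ≤ Real.exp (-(((t + 1) / 2 : ℕ) : ℝ) / ((n.choose 2 : ℝ) + n)) ∧
      Real.exp (-(t : ℝ) / ((n.choose 2 : ℝ) - 1)) ≤ travProb n t u v := by
  have hC : (1 : ℝ) < n.choose 2 := by
    exact_mod_cast (by decide : 1 < Nat.choose 4 2).trans_le (Nat.choose_le_choose 2 hn)
  constructor
  · calc _ ≤ (1 - ((n.choose 2 : ℝ) + n)⁻¹) ^ t :=
          travProb_le_one_sub_inv_choose_add_pow hn.le huv t
      _ ≤ Real.exp (-t / ((n.choose 2 : ℝ) + n)) :=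
          one_sub_inv_pow_le_exp_neg_div (by linarith [(n.cast_nonneg : (0 : ℝ) ≤ n)]) t
      _ ≤ _ := by
          gcongr
          exact_mod_cast (by omega : (t + 1) / 2 ≤ t)
  · exact (exp_neg_div_le_one_sub_inv_pow hC t).trans
      (one_sub_inv_choose_pow_le_travProb hn.le huv t)

/-- Exponential bounds on the probability `𝔭_{t,u,v}` that a fixed pair
of distinct vertices has not been traversed by the edgelighter by time `t`:
`exp(-t/(C(n,2)-1)) ≤ 𝔭_{t,u,v} ≤ exp(-⌊(t+1)/2⌋/(C(n,2)+n))`. -/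
theorem travProb_exp_bounds (n : ℕ) (hn : 3 < n) (t : ℕ) (ht : 1 ≤ t)
    (u v : Fin n) (huv : u ≠ v) :
    travProb n t u v ≤ Real.exp (-(((t + 1) / 2 : ℕ) : ℝ) / ((n.choose 2 : ℝ) + n)) ∧
      Real.exp (-(t : ℝ) / ((n.choose 2 : ℝ) - 1)) ≤ travProb n t u v :=
  travProb_exp_bounds_general n hn t u v huv
end

section
/- Let n ≥ 2 and q1, q2 ∈ (0,1), and let P denote the one-step transition probability function of the standard edgelighter walk on n vertices. Define the weight function w on the state space V × {0,1}^{binom(V,2)} by w((u,c)) = q2^{m_c}·q1^{r_c}, where m_c is the number of pairs with status 1 in c and r_c is the number of pairs with status 0 in c. Then the chain satisfies detailed balance with respect to w: for all states x, y, w(x)·P(x,y) = w(y)·P(y,x). Consequently the standard edgelighter walk is reversible with respect to the probability distribution π°((u,c)) ∝ (1/n)·q2^{m_c}·q1^{r_c}, which is therefore its stationary distribution. -/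
open scoped BigOperators
open scoped Classical
open Finset Matrix

/-- Unordered pairs of distinct vertices. -/
abbrev EPair (n : ℕ) := {e : Sym2 (Fin n) // ¬ e.IsDiag}

/-- An on/off configuration on the pairs of distinct vertices. -/
abbrev EConfig (n : ℕ) := EPair n → Bool

/-- State of the standard edgelighter walk: walker position and configuration. -/
abbrev EState (n : ℕ) := Fin n × EConfig n

def mkEPair {n : ℕ} (u v : Fin n) (h : u ≠ v) : EPair n :=
  ⟨s(u, v), by simpa using h⟩

def flipAt {n : ℕ} (c : EConfig n) (e : EPair n) : EConfig n :=
  Function.update c e (! c e)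

/-- One-step transition probabilities of the standard edgelighter walk with
parameters `q1 q2` on `n` vertices. -/
noncomputable def elStep (n : ℕ) (q1 q2 : ℝ) : EState n → EState n → ℝ := fun x y =>
  if hvu : y.1 = x.1 then (if y.2 = x.2 then 1 / (n : ℝ) else 0)
  else
    let e : EPair n := mkEPair x.1 y.1 (Ne.symm hvu)
    let q : ℝ := if x.2 e then q1 else q2
    if y.2 = x.2 then (1 - q) / (n : ℝ)
    else if y.2 = flipAt x.2 e then q / (n : ℝ)
    else 0

/-- `t`-step transition probabilities of a kernel on a finite state space. -/
noncomputable def kPow {S : Type*} [Fintype S] (P : S → S → ℝ) : ℕ → S → S → ℝ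
  | 0 => fun x y => if x = y then 1 else 0
  | (t + 1) => fun x y => ∑ z : S, kPow P t x z * P z y

/-- Total variation distance between two distributions on a finite space. -/
noncomputable def tvDist {S : Type*} [Fintype S] (μ ν : S → ℝ) : ℝ :=
  (∑ x : S, |μ x - ν x|) / 2

def onCount {n : ℕ} (c : EConfig n) : ℕ := (Finset.univ.filter fun e => c e = true).card

def offCount {n : ℕ} (c : EConfig n) : ℕ := (Finset.univ.filter fun e => c e = false).card

noncomputable def elWeight {n : ℕ} (q1 q2 : ℝ) (x : EState n) : ℝ :=
  q2 ^ onCount x.2 * q1 ^ offCount x.2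

/-- The stationary distribution `π°` of the standard edgelighter walk,
`π°((u,c)) ∝ (1/n) q2^{#on(c)} q1^{#off(c)}`. -/
noncomputable def elStat (n : ℕ) (q1 q2 : ℝ) (x : EState n) : ℝ :=
  ((1 / (n : ℝ)) * elWeight q1 q2 x) / ∑ y : EState n, (1 / (n : ℝ)) * elWeight q1 q2 y

/-- Total variation mixing time of the standard edgelighter walk. -/
noncomputable def elMixingTime (n : ℕ) (q1 q2 : ℝ) : ℕ :=
  sInf {t : ℕ | ∀ x : EState n,
    tvDist (kPow (elStep n q1 q2) t x) (elStat n q1 q2) < 1 / 4}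

/-!
Turning a pair from on to off trades a factor `q2` of the weight for a factor `q1`. Hence, with
`q(on) = q1` and `q(off) = q2` the probabilities of flipping a pair, `w(c) q(c e) = w(c') q(c' e)`
whenever `c'` is `c` with the pair `e` flipped: this is detailed balance for the moves that
change the configuration, while a move that keeps the configuration has the same probability in
both directions. Detailed balance survives rescaling of the weight, and together with the rows
of the kernel summing to one it gives stationarity.
-/

section DetailedBalance

variable {S : Type*} {P : S → S → ℝ} {w : S → ℝ}

def DetailedBalance (P : S → S → ℝ) (w : S → ℝ) : Prop :=
  ∀ x y, w x * P x y = w y * P y x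

theorem DetailedBalance.const_mul (h : DetailedBalance P w) (a : ℝ) :
    DetailedBalance P fun x => a * w x := by
  intro x y
  rw [mul_assoc, mul_assoc, h]

theorem DetailedBalance.div_const (h : DetailedBalance P w) (b : ℝ) :
    DetailedBalance P fun x => w x / b := by
  intro x y
  rw [div_mul_eq_mul_div, div_mul_eq_mul_div, h]

theorem DetailedBalance.sum_mul_eq [Fintype S] (h : DetailedBalance P w)
    (hP : ∀ x, ∑ y, P x y = 1) (y : S) : ∑ x, w x * P x y = w y := by
  simp_rw [h _ y, ← Finset.mul_sum, hP, mul_one]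

end DetailedBalance

section Edgelighter

variable {n : ℕ}

def flipProb (q1 q2 : ℝ) (b : Bool) : ℝ := if b then q1 else q2

theorem flipAt_apply_self (c : EConfig n) (e : EPair n) : flipAt c e e = !c e := by
  simp [flipAt]

theorem flipAt_flipAt (c : EConfig n) (e : EPair n) : flipAt (flipAt c e) e = c := by
  simp [flipAt]

theorem flipAt_ne (c : EConfig n) (e : EPair n) : flipAt c e ≠ c :=
  fun h => by simpa [flipAt_apply_self] using congrFun h e

theorem mkEPair_comm {u v : Fin n} (h : u ≠ v) : mkEPair v u h.symm = mkEPair u v h := by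
  simp [mkEPair, Sym2.eq_swap]

theorem onCount_flipAt_add_one {c : EConfig n} {e : EPair n} (he : c e = true) :
    onCount (flipAt c e) + 1 = onCount c := by
  have hon : Finset.univ.filter (fun e' => flipAt c e e' = true)
      = (Finset.univ.filter fun e' => c e' = true).erase e := by
    ext e'
    rw [Finset.mem_filter]
    rcases eq_or_ne e' e with rfl | hne
    · simp [flipAt_apply_self, he]
    · simp [flipAt, hne]
  rw [onCount, onCount, hon, Finset.card_erase_add_one (by simpa using he)]

theorem offCount_flipAt {c : EConfig n} {e : EPair n} (he : c e = true) :
    offCount (flipAt c e) = offCount c + 1 := by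
  have hoff : Finset.univ.filter (fun e' => flipAt c e e' = false)
      = insert e (Finset.univ.filter fun e' => c e' = false) := by
    ext e'
    rw [Finset.mem_filter]
    rcases eq_or_ne e' e with rfl | hne
    · simp [flipAt_apply_self, he]
    · simp [flipAt, hne]
  rw [offCount, offCount, hoff, Finset.card_insert_of_notMem (by simp [he])]

theorem elWeight_flipAt_mul (q1 q2 : ℝ) (u v : Fin n) {c : EConfig n} {e : EPair n}
    (he : c e = true) :
    elWeight q1 q2 (v, flipAt c e) * q2 = elWeight q1 q2 (u, c) * q1 := by
  simp only [elWeight, ← onCount_flipAt_add_one he, offCount_flipAt he]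
  ring

theorem elWeight_mul_flipProb (q1 q2 : ℝ) (u v : Fin n) (c : EConfig n) (e : EPair n) :
    elWeight q1 q2 (u, c) * flipProb q1 q2 (c e)
      = elWeight q1 q2 (v, flipAt c e) * flipProb q1 q2 (flipAt c e e) := by
  cases he : c e
  · have he' : flipAt c e e = true := by simp [flipAt_apply_self, he]
    have := elWeight_flipAt_mul q1 q2 v u he'
    simp_all [flipProb, flipAt_flipAt]
  · have := elWeight_flipAt_mul q1 q2 u v he
    simp_all [flipProb, flipAt_apply_self]

theorem elStep_same_fst (q1 q2 : ℝ) (u : Fin n) (c c' : EConfig n) :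
    elStep n q1 q2 (u, c) (u, c') = if c' = c then 1 / (n : ℝ) else 0 := by
  simp [elStep]

theorem elStep_of_ne (q1 q2 : ℝ) {u v : Fin n} (h : u ≠ v) (c c' : EConfig n) :
    elStep n q1 q2 (u, c) (v, c') =
      if c' = c then (1 - flipProb q1 q2 (c (mkEPair u v h))) / (n : ℝ)
      else if c' = flipAt c (mkEPair u v h) then flipProb q1 q2 (c (mkEPair u v h)) / (n : ℝ)
      else 0 := by
  simp only [elStep, dif_neg h.symm, flipProb]

theorem elStep_detailedBalance (n : ℕ) (q1 q2 : ℝ) :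
    DetailedBalance (elStep n q1 q2) (elWeight q1 q2) := by
  rintro ⟨u, c⟩ ⟨v, c'⟩
  rcases eq_or_ne u v with rfl | huv
  · simp only [elStep_same_fst, eq_comm (a := c')]
    split_ifs with hc
    · rw [hc]
    · simp
  rw [elStep_of_ne q1 q2 huv, elStep_of_ne q1 q2 huv.symm, mkEPair_comm huv]
  set e := mkEPair u v huv
  by_cases hc : c' = c
  · subst hc
    simp only [if_true]
    rfl
  by_cases hflip : c' = flipAt c e
  · subst hflip
    simp only [hc, if_false, (flipAt_ne c e).symm, flipAt_flipAt, if_true, ← mul_div_assoc,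
      elWeight_mul_flipProb q1 q2 u v]
  · have hflip' : c ≠ flipAt c' e := fun h => hflip (by rw [h, flipAt_flipAt])
    simp only [hc, hflip, Ne.symm hc, hflip', if_false, mul_zero]

theorem sum_elStep_fst (q1 q2 : ℝ) (x : EState n) (v : Fin n) :
    ∑ c', elStep n q1 q2 x (v, c') = 1 / (n : ℝ) := by
  obtain ⟨u, c⟩ := x
  rcases eq_or_ne u v with rfl | huv
  · simp [elStep_same_fst]
  have hsplit : ∀ c', elStep n q1 q2 (u, c) (v, c')
      = (if c' = c then (1 - flipProb q1 q2 (c (mkEPair u v huv))) / (n : ℝ) else 0)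
        + if c' = flipAt c (mkEPair u v huv)
          then flipProb q1 q2 (c (mkEPair u v huv)) / (n : ℝ) else 0 := by
    intro c'
    rw [elStep_of_ne q1 q2 huv]
    split_ifs with h1 h2 <;> simp_all [flipAt_ne]
  simp only [hsplit, Finset.sum_add_distrib, Finset.sum_ite_eq', Finset.mem_univ, if_true]
  ring

theorem sum_elStep (q1 q2 : ℝ) (x : EState n) : ∑ y, elStep n q1 q2 x y = 1 := by
  have hn : (n : ℝ) ≠ 0 := Nat.cast_ne_zero.mpr (Fin.pos x.1).ne'
  simp [Fintype.sum_prod_type, sum_elStep_fst, hn]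

end Edgelighter

theorem edgelighter_detailed_balance_general (n : ℕ) (q1 q2 : ℝ) :
    (∀ x y : EState n,
        elWeight q1 q2 x * elStep n q1 q2 x y = elWeight q1 q2 y * elStep n q1 q2 y x) ∧
      (∀ x y : EState n,
        elStat n q1 q2 x * elStep n q1 q2 x y = elStat n q1 q2 y * elStep n q1 q2 y x) ∧
      (∀ y : EState n,
        ∑ x : EState n, elStat n q1 q2 x * elStep n q1 q2 x y = elStat n q1 q2 y) := by
  have hweight := elStep_detailedBalance n q1 q2
  have hstat : DetailedBalance (elStep n q1 q2) (elStat n q1 q2) :=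
    (hweight.const_mul _).div_const _
  exact ⟨hweight, hstat, hstat.sum_mul_eq (sum_elStep q1 q2)⟩

/-- The standard edgelighter walk satisfies detailed balance with respect
to the weight `w((u,c)) = q2^{#on(c)} q1^{#off(c)}`; consequently it is reversible with
respect to the probability distribution `π°((u,c)) ∝ (1/n) q2^{#on(c)} q1^{#off(c)}`,
which is therefore its stationary distribution. -/
theorem edgelighter_detailed_balance (n : ℕ) (hn : 1 ≤ n) (q1 q2 : ℝ)
    (hq1 : q1 ∈ Set.Ioo (0 : ℝ) 1) (hq2 : q2 ∈ Set.Ioo (0 : ℝ) 1) :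
    (∀ x y : EState n,
        elWeight q1 q2 x * elStep n q1 q2 x y = elWeight q1 q2 y * elStep n q1 q2 y x) ∧
      (∀ x y : EState n,
        elStat n q1 q2 x * elStep n q1 q2 x y = elStat n q1 q2 y * elStep n q1 q2 y x) ∧
      (∀ y : EState n,
        ∑ x : EState n, elStat n q1 q2 x * elStep n q1 q2 x y = elStat n q1 q2 y) :=
  edgelighter_detailed_balance_general n q1 q2
end

section
/- Let V = {1,…,n} be partitioned into communities B_1,…,B_K with |B_i| = n_i, let q_{i;1}, q_{i;2} ∈ (0,1) for each i, and let P denote the one-step transition probability function of the block edgelighter walk, restricted to the set of states in which the number of on pairs between B_i and B_j equals a fixed value m_{ij} for every pair of distinct communities i ≠ j. Define w((B_i, u, c)) = (1/K)·(1/n_i)·∏_j q_{j;2}^{m_{j,c}}·q_{j;1}^{r_{j,c}}·∏_{i<j} 1/binom(n_i·n_j, m_{ij}), where m_{j,c} (resp. r_{j,c}) is the number of pairs of vertices within B_j with status 1 (resp. status 0) in c. Then the block edgelighter walk satisfies detailed balance with respect to w: for all states x, y in the restricted state space, w(x)·P(x,y) = w(y)·P(y,x); hence the chain is reversible with respect to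 the probability distribution proportional to w. -/
open scoped BigOperators
open scoped Classical
open Finset Matrix

/-- Adjacency matrix of a configuration. -/
noncomputable def adjOf {n : ℕ} (c : EConfig n) : Matrix (Fin n) (Fin n) ℝ :=
  Matrix.of fun i j => if h : i = j then 0 else if c (mkEPair i j h) then 1 else 0

/-- Permutation matrix of a permutation. -/
noncomputable def permMat {n : ℕ} (σ : Equiv.Perm (Fin n)) : Matrix (Fin n) (Fin n) ℝ :=
  Matrix.of fun i j => if σ i = j then 1 else 0

/-- Graph matching objective `Tr(A P B Pᵀ)`. -/
noncomputable def gmObj {n : ℕ} (c0 ct : EConfig n) (σ : Equiv.Perm (Fin n)) : ℝ :=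
  Matrix.trace (adjOf c0 * permMat σ * adjOf ct * (permMat σ)ᵀ)

/-- Number of non-fixed points of a permutation. -/
def nonfixed {n : ℕ} (σ : Equiv.Perm (Fin n)) : ℕ :=
  (Finset.univ.filter fun i => σ i ≠ i).card

/-- ER(n,p) probability of a given configuration. -/
noncomputable def erWeight (n : ℕ) (p : ℝ) (c : EConfig n) : ℝ :=
  p ^ onCount c * (1 - p) ^ offCount c
/-- Joint probability that the initial configuration (drawn from ER(n,p)) is `c0` and the
configuration after `t` steps of the standard edgelighter walk (with the initial walker
position uniform on the vertices, independent of the graph) is `ct`. -/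
noncomputable def elJoint (n : ℕ) (p q1 q2 : ℝ) (t : ℕ) (c0 ct : EConfig n) : ℝ :=
  erWeight n p c0 *
    ∑ u : Fin n, (1 / (n : ℝ)) *
      ∑ v : Fin n, kPow (elStep n q1 q2) t (u, c0) (v, ct)

/-- State of the block edgelighter walk: community label, walker position, configuration. -/
abbrev BState (n K : ℕ) := Fin K × Fin n × EConfig n

/-- Size of community `i` under the community assignment `τ`. -/
def commCard {n K : ℕ} (τ : Fin n → Fin K) (i : Fin K) : ℕ :=
  (Finset.univ.filter fun u => τ u = i).card

/-- Number of 'on' pairs between communities `i` and `j`. -/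
def crossOn {n K : ℕ} (τ : Fin n → Fin K) (c : EConfig n) (i j : Fin K) : ℕ :=
  (Finset.univ.filter fun e : EPair n => c e = true ∧ Sym2.map τ e.1 = s(i, j)).card

/-- Number of 'off' pairs between communities `i` and `j`. -/
def crossOff {n K : ℕ} (τ : Fin n → Fin K) (c : EConfig n) (i j : Fin K) : ℕ :=
  (Finset.univ.filter fun e : EPair n => c e = false ∧ Sym2.map τ e.1 = s(i, j)).card

/-- Number of 'on' pairs within community `j`. -/
def onIn {n K : ℕ} (τ : Fin n → Fin K) (j : Fin K) (c : EConfig n) : ℕ := crossOn τ c j j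

/-- Number of 'off' pairs within community `j`. -/
def offIn {n K : ℕ} (τ : Fin n → Fin K) (j : Fin K) (c : EConfig n) : ℕ := crossOff τ c j j

/-- One-step transition probabilities of the block edgelighter walk. -/
noncomputable def blStep {n K : ℕ} (τ : Fin n → Fin K) (q1 q2 : Fin K → ℝ) :
    BState n K → BState n K → ℝ := fun x y =>
  if τ y.2.1 ≠ y.1 then 0
  else if y.1 = x.1 then
    (if hvu : y.2.1 = x.2.1 then
      (if y.2.2 = x.2.2 then 1 / (2 * (commCard τ x.1 : ℝ)) else 0)
     else
      let e : EPair n := mkEPair x.2.1 y.2.1 (Ne.symm hvu)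
      let q : ℝ := if x.2.2 e then q1 x.1 else q2 x.1
      if y.2.2 = x.2.2 then (1 - q) / (2 * (commCard τ x.1 : ℝ))
      else if y.2.2 = flipAt x.2.2 e then q / (2 * (commCard τ x.1 : ℝ))
      else 0)
  else
    if ∃ e1 e2 : EPair n, x.2.2 e1 = true ∧ x.2.2 e2 = false ∧
        Sym2.map τ e1.1 = s(x.1, y.1) ∧ Sym2.map τ e2.1 = s(x.1, y.1) ∧
        y.2.2 = flipAt (flipAt x.2.2 e1) e2
    then 1 / (2 * ((K : ℝ) - 1) * (commCard τ y.1 : ℝ) *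
          (crossOn τ x.2.2 x.1 y.1 : ℝ) * (crossOff τ x.2.2 x.1 y.1 : ℝ))
    else 0

/-- Probability of a configuration under the SBM with connection matrix `Λ`
(symmetrized) and community assignment `τ`. -/
noncomputable def pairProb {n K : ℕ} (Λ : Fin K → Fin K → ℝ) (τ : Fin n → Fin K)
    (e : EPair n) : ℝ :=
  Sym2.lift ⟨fun a b => (Λ (τ a) (τ b) + Λ (τ b) (τ a)) / 2, fun a b => by ring⟩ e.1

noncomputable def sbmWeight {n K : ℕ} (Λ : Fin K → Fin K → ℝ) (τ : Fin n → Fin K)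
    (c : EConfig n) : ℝ :=
  ∏ e : EPair n, (if c e then pairProb Λ τ e else 1 - pairProb Λ τ e)

/-- Joint probability of the initial configuration (drawn from the SBM) and
the configuration after `t` steps of the block edgelighter walk, with the initial
walker position uniform on the vertices. -/
noncomputable def blJoint (n K : ℕ) (Λ : Fin K → Fin K → ℝ) (τ : Fin n → Fin K)
    (q1 q2 : Fin K → ℝ) (t : ℕ) (c0 ct : EConfig n) : ℝ :=
  sbmWeight Λ τ c0 *
    ∑ u : Fin n, (1 / (n : ℝ)) *
      ∑ j : Fin K, ∑ v : Fin n, kPow (blStep τ q1 q2) t (τ u, u, c0) (j, v, ct)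

/-- The restricted state space: the walker is in the community given by the label,
and the number of 'on' pairs between any two distinct communities is prescribed. -/
abbrev BValid (n K : ℕ) (τ : Fin n → Fin K) (m : Fin K → Fin K → ℕ) :=
  {x : BState n K // τ x.2.1 = x.1 ∧ ∀ i j : Fin K, i ≠ j → crossOn τ x.2.2 i j = m i j}

/-- The reversing weight of the block edgelighter walk. -/
noncomputable def blWeight {n K : ℕ} (τ : Fin n → Fin K) (q1 q2 : Fin K → ℝ)
    (m : Fin K → Fin K → ℕ) (x : BState n K) : ℝ :=
  (1 / (K : ℝ)) * (1 / (commCard τ x.1 : ℝ)) *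
    (∏ j : Fin K, (q2 j) ^ onIn τ j x.2.2 * (q1 j) ^ offIn τ j x.2.2) *
    ∏ pr ∈ Finset.univ.filter (fun pr : Fin K × Fin K => pr.1 < pr.2),
      (1 : ℝ) / ((commCard τ pr.1 * commCard τ pr.2).choose (m pr.1 pr.2) : ℝ)

/-- Stationary distribution of the restricted block edgelighter walk. -/
noncomputable def blStatR (n K : ℕ) (τ : Fin n → Fin K) (q1 q2 : Fin K → ℝ)
    (m : Fin K → Fin K → ℕ) (x : BValid n K τ m) : ℝ :=
  blWeight τ q1 q2 m x.1 / ∑ y : BValid n K τ m, blWeight τ q1 q2 m y.1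

/-- Total variation mixing time of the block edgelighter walk on the restricted
state space. -/
noncomputable def blMixingTime (n K : ℕ) (τ : Fin n → Fin K) (q1 q2 : Fin K → ℝ)
    (m : Fin K → Fin K → ℕ) : ℕ :=
  sInf {t : ℕ | ∀ x : BValid n K τ m,
    tvDist (kPow (fun a b : BValid n K τ m => blStep τ q1 q2 a.1 b.1) t x)
      (blStatR n K τ q1 q2 m) < 1 / 4}

/-!
Within a community the walk is an edgelighter walk: flipping a pair switches its factor in
the weight `∏ q_{j;2}^{#on} q_{j;1}^{#off}` between `q_{j;2}` and `q_{j;1}`, which is exactly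
the ratio of the probabilities of the flip and of the flip back. A move between communities
`i ≠ j` swaps one on and one off pair between them, so it does not change the within-community
weight, and on the restricted state space the numbers of on and off pairs between `i` and `j`
are the same before and after; the two transition probabilities then differ only in the factors
`1/n_j` and `1/n_i`, which the factor `1/n_i` of the weight balances.
-/

namespace BlockEdgelighter

variable {n K : ℕ}

lemma ite_not_bool {α : Type*} (b : Bool) (x y : α) :
    (if !b then x else y) = if b then y else x := by
  cases b <;> rfl

lemma mkEPair_comm (u v : Fin n) (h : u ≠ v) : mkEPair u v h = mkEPair v u h.symm := by
  simp [mkEPair, Sym2.eq_swap]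

section Flip

variable (c : EConfig n) (e : EPair n)

@[simp]
lemma flipAt_apply_self : flipAt c e e = !c e := by
  simp [flipAt]

lemma flipAt_apply_of_ne {e' : EPair n} (h : e' ≠ e) : flipAt c e e' = c e' :=
  Function.update_of_ne h _ _

@[simp]
lemma flipAt_flipAt : flipAt (flipAt c e) e = c := by
  funext e'
  by_cases h : e' = e
  · subst h; simp
  · simp [flipAt_apply_of_ne _ _ h]

variable {M : Type*} [CommMonoid M] (g : Bool → M) {s : Finset (EPair n)}

lemma prod_flipAt_of_notMem (he : e ∉ s) :
    ∏ a ∈ s, g (flipAt c e a) = ∏ a ∈ s, g (c a) :=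
  prod_congr rfl fun _ ha => by rw [flipAt_apply_of_ne c e (ne_of_mem_of_not_mem ha he)]

lemma prod_flipAt_mul (he : e ∈ s) :
    (∏ a ∈ s, g (flipAt c e a)) * g (c e) = (∏ a ∈ s, g (c a)) * g (!c e) := by
  rw [← mul_prod_erase s _ he, ← mul_prod_erase s _ he, flipAt_apply_self,
    prod_flipAt_of_notMem c e g (notMem_erase e s)]
  ac_rfl

end Flip

def blockPairs (τ : Fin n → Fin K) (i j : Fin K) : Finset (EPair n) :=
  univ.filter fun e => Sym2.map τ e.1 = s(i, j)

variable (τ : Fin n → Fin K)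

lemma notMem_blockPairs_self {e : EPair n} {i j k : Fin K} (he : Sym2.map τ e.1 = s(i, j))
    (hk : i ≠ k ∨ j ≠ k) : e ∉ blockPairs τ k k := by
  simp only [blockPairs, mem_filter, mem_univ, true_and, he, Sym2.eq_iff]
  rintro (⟨rfl, rfl⟩ | ⟨rfl, rfl⟩) <;> simp at hk

lemma crossOn_comm (c : EConfig n) (i j : Fin K) : crossOn τ c i j = crossOn τ c j i := by
  simp only [crossOn, Sym2.eq_swap]

lemma crossOff_comm (c : EConfig n) (i j : Fin K) : crossOff τ c i j = crossOff τ c j i := by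
  simp only [crossOff, Sym2.eq_swap]

lemma crossOn_add_crossOff (c : EConfig n) (i j : Fin K) :
    crossOn τ c i j + crossOff τ c i j = #(blockPairs τ i j) := by
  rw [← card_filter_add_card_filter_not (fun e => c e = true)]
  simp only [crossOn, crossOff, blockPairs, filter_filter, Bool.not_eq_true, and_comm]

lemma pow_onIn_mul_pow_offIn {M : Type*} [CommMonoid M] (a b : M) (c : EConfig n) (k : Fin K) :
    a ^ onIn τ k c * b ^ offIn τ k c = ∏ e ∈ blockPairs τ k k, if c e then a else b := by
  rw [prod_ite, prod_const, prod_const]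
  simp only [onIn, offIn, crossOn, crossOff, blockPairs, filter_filter, Bool.not_eq_true, and_comm]

variable (q1 q2 : Fin K → ℝ)

/-- The factor `∏_j q_{j;2}^{m_{j,c}} q_{j;1}^{r_{j,c}}` of `blWeight`. -/
def withinWeight (c : EConfig n) : ℝ :=
  ∏ j : Fin K, q2 j ^ onIn τ j c * q1 j ^ offIn τ j c

lemma blWeight_eq (m : Fin K → Fin K → ℕ) (x : BState n K) :
    blWeight τ q1 q2 m x = (1 / (K : ℝ)) * (1 / (commCard τ x.1 : ℝ)) *
      withinWeight τ q1 q2 x.2.2 *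
      ∏ pr ∈ univ.filter (fun pr : Fin K × Fin K => pr.1 < pr.2),
        (1 : ℝ) / ((commCard τ pr.1 * commCard τ pr.2).choose (m pr.1 pr.2) : ℝ) :=
  rfl

lemma withinWeight_eq_prod (c : EConfig n) :
    withinWeight τ q1 q2 c = ∏ k, ∏ e ∈ blockPairs τ k k, if c e then q2 k else q1 k := by
  simp only [withinWeight, pow_onIn_mul_pow_offIn]

lemma withinWeight_flipAt_of_ne {c : EConfig n} {e : EPair n} {i j : Fin K} (hij : i ≠ j)
    (he : Sym2.map τ e.1 = s(i, j)) :
    withinWeight τ q1 q2 (flipAt c e) = withinWeight τ q1 q2 c := by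
  simp only [withinWeight_eq_prod]
  refine prod_congr rfl fun k _ => prod_flipAt_of_notMem c e (fun b => if b then q2 k else q1 k) ?_
  exact notMem_blockPairs_self τ he (not_and_or.mp fun h => hij (h.1.trans h.2.symm))

lemma withinWeight_flipAt_mul {c : EConfig n} {e : EPair n} {i : Fin K}
    (he : Sym2.map τ e.1 = s(i, i)) :
    withinWeight τ q1 q2 (flipAt c e) * (if c e then q2 i else q1 i) =
      withinWeight τ q1 q2 c * (if c e then q1 i else q2 i) := by
  have hi : e ∈ blockPairs τ i i := by simp [blockPairs, he]
  have hothers : ∀ k ∈ univ.erase i,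
      (∏ a ∈ blockPairs τ k k, if flipAt c e a then q2 k else q1 k) =
        ∏ a ∈ blockPairs τ k k, if c a then q2 k else q1 k := fun k hk =>
    prod_flipAt_of_notMem c e (fun b => if b then q2 k else q1 k)
      (notMem_blockPairs_self τ he (.inl (ne_of_mem_erase hk).symm))
  have hblock := prod_flipAt_mul c e (fun b => if b then q2 i else q1 i) hi
  rw [withinWeight_eq_prod, withinWeight_eq_prod, ← mul_prod_erase univ _ (mem_univ i),
    ← mul_prod_erase univ _ (mem_univ i), prod_congr rfl hothers]
  rw [ite_not_bool] at hblock
  linear_combination (∏ k ∈ univ.erase i, ∏ a ∈ blockPairs τ k k,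
    if c a then q2 k else q1 k) * hblock

/-- The condition under which `blStep` moves the configuration from `c` to `c'` when the walker
leaves community `i` for community `j`. -/
def IsBlockSwap (i j : Fin K) (c c' : EConfig n) : Prop :=
  ∃ e1 e2 : EPair n, c e1 = true ∧ c e2 = false ∧
    Sym2.map τ e1.1 = s(i, j) ∧ Sym2.map τ e2.1 = s(i, j) ∧ c' = flipAt (flipAt c e1) e2

lemma IsBlockSwap.symm {i j : Fin K} {c c' : EConfig n} (h : IsBlockSwap τ i j c c') :
    IsBlockSwap τ j i c' c := by
  obtain ⟨e1, e2, h1, h2, he1, he2, rfl⟩ := h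
  have hne : e2 ≠ e1 := by rintro rfl; simp [h1] at h2
  refine ⟨e2, e1, ?_, ?_, he2.trans Sym2.eq_swap, he1.trans Sym2.eq_swap, ?_⟩
  · simp [flipAt_apply_of_ne _ _ hne, h2]
  · simp [flipAt_apply_of_ne _ _ hne.symm, h1]
  · simp

lemma IsBlockSwap.withinWeight_eq {i j : Fin K} {c c' : EConfig n} (hij : i ≠ j)
    (h : IsBlockSwap τ i j c c') : withinWeight τ q1 q2 c' = withinWeight τ q1 q2 c := by
  obtain ⟨e1, e2, -, -, he1, he2, rfl⟩ := h
  rw [withinWeight_flipAt_of_ne τ q1 q2 hij he2, withinWeight_flipAt_of_ne τ q1 q2 hij he1]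

lemma blStep_of_eq_vertex (i : Fin K) (u : Fin n) {c c' : EConfig n} (h : c' ≠ c) :
    blStep τ q1 q2 (i, u, c) (i, u, c') = 0 := by
  simp [blStep, h]

lemma blStep_of_ne_vertex {i : Fin K} {u v : Fin n} (hv : τ v = i) (huv : u ≠ v)
    (c c' : EConfig n) :
    blStep τ q1 q2 (i, u, c) (i, v, c') =
      if c' = c then (1 - if c (mkEPair u v huv) then q1 i else q2 i) / (2 * (commCard τ i : ℝ))
      else if c' = flipAt c (mkEPair u v huv) then
        (if c (mkEPair u v huv) then q1 i else q2 i) / (2 * (commCard τ i : ℝ))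
      else 0 := by
  simp [blStep, hv, huv.symm]

lemma blStep_of_ne_comm {i j : Fin K} {u v : Fin n} (hv : τ v = j) (hij : i ≠ j)
    (c c' : EConfig n) :
    blStep τ q1 q2 (i, u, c) (j, v, c') =
      if IsBlockSwap τ i j c c' then 1 / (2 * ((K : ℝ) - 1) * (commCard τ j : ℝ) *
        (crossOn τ c i j : ℝ) * (crossOff τ c i j : ℝ))
      else 0 := by
  simp [blStep, hv, hij.symm, IsBlockSwap]

variable (m : Fin K → Fin K → ℕ)

lemma blWeight_mul_blStep_of_eq_vertex (i : Fin K) (u : Fin n) (cx cy : EConfig n) :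
    blWeight τ q1 q2 m (i, u, cx) * blStep τ q1 q2 (i, u, cx) (i, u, cy) =
      blWeight τ q1 q2 m (i, u, cy) * blStep τ q1 q2 (i, u, cy) (i, u, cx) := by
  rcases eq_or_ne cy cx with rfl | hc
  · rfl
  · rw [blStep_of_eq_vertex τ q1 q2 i u hc, blStep_of_eq_vertex τ q1 q2 i u hc.symm,
      mul_zero, mul_zero]

lemma blWeight_mul_blStep_of_ne_vertex {i : Fin K} {u v : Fin n} (hu : τ u = i) (hv : τ v = i)
    (huv : u ≠ v) (cx cy : EConfig n) :
    blWeight τ q1 q2 m (i, u, cx) * blStep τ q1 q2 (i, u, cx) (i, v, cy) =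
      blWeight τ q1 q2 m (i, v, cy) * blStep τ q1 q2 (i, v, cy) (i, u, cx) := by
  set e := mkEPair u v huv
  have he : Sym2.map τ e.1 = s(i, i) := by simp [e, mkEPair, hu, hv]
  rw [blStep_of_ne_vertex τ q1 q2 hv huv, blStep_of_ne_vertex τ q1 q2 hu huv.symm,
    mkEPair_comm v u]
  rcases eq_or_ne cy cx with rfl | hc
  · rfl
  rcases eq_or_ne cy (flipAt cx e) with rfl | hflip
  · rw [if_neg hc, if_pos rfl, if_neg hc.symm, if_pos (flipAt_flipAt cx e).symm, blWeight_eq,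
      blWeight_eq, flipAt_apply_self, ite_not_bool]
    generalize (∏ pr ∈ _, _ : ℝ) = C
    linear_combination
      -(1 / (K : ℝ)) * (1 / (commCard τ i : ℝ)) * C / (2 * (commCard τ i : ℝ)) *
        withinWeight_flipAt_mul τ q1 q2 he (c := cx)
  · rw [if_neg hc, if_neg hflip, if_neg hc.symm,
      if_neg fun h => hflip (by rw [h, flipAt_flipAt]), mul_zero, mul_zero]

lemma blWeight_mul_blStep_of_ne_comm {i j : Fin K} {u v : Fin n} (hu : τ u = i) (hv : τ v = j)
    (hij : i ≠ j) {cx cy : EConfig n} (hm : crossOn τ cx i j = crossOn τ cy i j) :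
    blWeight τ q1 q2 m (i, u, cx) * blStep τ q1 q2 (i, u, cx) (j, v, cy) =
      blWeight τ q1 q2 m (j, v, cy) * blStep τ q1 q2 (j, v, cy) (i, u, cx) := by
  rw [blStep_of_ne_comm τ q1 q2 hv hij, blStep_of_ne_comm τ q1 q2 hu hij.symm]
  by_cases h : IsBlockSwap τ i j cx cy
  · have hoff : crossOff τ cx i j = crossOff τ cy i j := by
      have := crossOn_add_crossOff τ cx i j
      have := crossOn_add_crossOff τ cy i j
      omega
    rw [if_pos h, if_pos h.symm, blWeight_eq, blWeight_eq, h.withinWeight_eq τ q1 q2 hij,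
      crossOn_comm τ cy, crossOff_comm τ cy, ← hm, ← hoff]
    simp only [one_div, mul_inv]
    ring
  · rw [if_neg h, if_neg fun h' => h h'.symm, mul_zero, mul_zero]

end BlockEdgelighter

open BlockEdgelighter in
theorem block_edgelighter_detailed_balance_general (n K : ℕ)
    (τ : Fin n → Fin K) (q1 q2 : Fin K → ℝ)
    (m : Fin K → Fin K → ℕ) (x y : BState n K)
    (hx : τ x.2.1 = x.1) (hy : τ y.2.1 = y.1)
    (hxm : ∀ i j : Fin K, i ≠ j → crossOn τ x.2.2 i j = m i j)
    (hym : ∀ i j : Fin K, i ≠ j → crossOn τ y.2.2 i j = m i j) :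
    blWeight τ q1 q2 m x * blStep τ q1 q2 x y =
      blWeight τ q1 q2 m y * blStep τ q1 q2 y x := by
  obtain ⟨i, u, cx⟩ := x
  obtain ⟨j, v, cy⟩ := y
  rcases eq_or_ne i j with rfl | hij
  · rcases eq_or_ne u v with rfl | huv
    · exact blWeight_mul_blStep_of_eq_vertex τ q1 q2 m i u cx cy
    · exact blWeight_mul_blStep_of_ne_vertex τ q1 q2 m hx hy huv cx cy
  · exact blWeight_mul_blStep_of_ne_comm τ q1 q2 m hx hy hij
      ((hxm i j hij).trans (hym i j hij).symm)

/-- The block edgelighter walk satisfies detailed balance, on the state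
space restricted so that the number of on pairs between any two distinct communities `i ≠ j`
equals `m i j`, with respect to the weight
`w((B_i,u,c)) = (1/K)(1/n_i) ∏_j q_{j;2}^{m_{j,c}} q_{j;1}^{r_{j,c}} ∏_{i<j} 1/C(n_i n_j, m_{ij})`;
hence the chain is reversible with respect to the probability distribution proportional to `w`. -/
theorem block_edgelighter_detailed_balance (n K : ℕ) (hK : 1 ≤ K)
    (τ : Fin n → Fin K) (q1 q2 : Fin K → ℝ)
    (hq1 : ∀ i, q1 i ∈ Set.Ioo (0 : ℝ) 1) (hq2 : ∀ i, q2 i ∈ Set.Ioo (0 : ℝ) 1)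
    (m : Fin K → Fin K → ℕ) (x y : BState n K)
    (hx : τ x.2.1 = x.1) (hy : τ y.2.1 = y.1)
    (hxm : ∀ i j : Fin K, i ≠ j → crossOn τ x.2.2 i j = m i j)
    (hym : ∀ i j : Fin K, i ≠ j → crossOn τ y.2.2 i j = m i j) :
    blWeight τ q1 q2 m x * blStep τ q1 q2 x y =
      blWeight τ q1 q2 m y * blStep τ q1 q2 y x :=
  block_edgelighter_detailed_balance_general n K τ q1 q2 m x y hx hy hxm hym
end

section
/- Let n and k be positive integers with 2k+1 ≤ n, and let 𝔫 = ⌊n/(2k+1)⌋. Then there exists a set S of permutations of {1,…,n} with |S| = (2k)^{𝔫} ≥ (2k)^{n/(2k+1) − 1} such that any two distinct elements of S ∪ {identity} disagree in at least 2k+1 positions; that is, for all distinct σ, τ ∈ S ∪ {id}, the number of i ∈ {1,…,n} with σ(i) ≠ τ(i) is at least 2k+1. -/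
open scoped BigOperators
open scoped Classical
open Finset

/-!
Identify `{1,…,n}` with `(Fin 𝔫 × ZMod (2k+1)) ⊕ R` for a remainder `R`. Translating the `j`-th
fibre by `a j` is the `a j`-th power of a cyclic derangement of a block of size `2k+1`, and
`a ↦ (translate by a)` is injective. Two different vectors `a ≠ b` differ in some coordinate `j`,
and then the two permutations disagree on the whole `j`-th fibre, i.e. in `2k+1` positions. Since
the identity is the vector `0`, taking all `a` with nonzero coordinates gives `(2k)^𝔫` permutations.
-/

namespace Equiv.Perm

section BlockShift

variable {ι G β : Type*} [AddGroup G]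

def blockShift (a : ι → G) : Perm ((ι × G) ⊕ β) :=
  sumCongr (prodShear (Equiv.refl ι) fun j => Equiv.addRight (a j)) (Equiv.refl β)

@[simp]
lemma blockShift_inl (a : ι → G) (j : ι) (x : G) :
    blockShift (β := β) a (Sum.inl (j, x)) = Sum.inl (j, x + a j) := rfl

@[simp]
lemma blockShift_zero : blockShift (β := β) (0 : ι → G) = 1 := by
  ext (⟨j, x⟩ | y) <;> simp [blockShift]

lemma blockShift_injective : Function.Injective (blockShift (ι := ι) (G := G) (β := β)) := by
  intro a b h
  funext j
  simpa using congr($h (Sum.inl (j, 0)))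

lemma card_le_card_filter_blockShift_ne [Fintype ι] [Fintype G] [Fintype β] {a b : ι → G}
    (h : a ≠ b) : Fintype.card G ≤ #{p | blockShift (β := β) a p ≠ blockShift b p} := by
  obtain ⟨j, hj⟩ := Function.ne_iff.1 h
  refine card_le_card_of_injOn (fun x => Sum.inl (j, x)) (fun x _ => ?_) (fun x _ y _ hxy => ?_)
  · simpa using hj
  · simpa using hxy

end BlockShift

lemma card_filter_permCongr_ne {α γ : Type*} [Fintype α] [Fintype γ] (e : α ≃ γ)
    (σ τ : Perm α) : #{y | e.permCongr σ y ≠ e.permCongr τ y} = #{x | σ x ≠ τ x} :=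
  card_equiv e.symm (by simp [permCongr_apply])

theorem exists_injective_separated_of_card_mul_card_le {α ι G : Type*} [Fintype α]
    [Fintype ι] [AddGroup G] [Fintype G] (h : Fintype.card ι * Fintype.card G ≤ Fintype.card α) :
    ∃ F : (ι → G) → Perm α, F.Injective ∧ F 0 = 1 ∧
      ∀ a b, a ≠ b → Fintype.card G ≤ #{x | F a x ≠ F b x} := by
  let E : (ι × G) ⊕ Fin (Fintype.card α - Fintype.card ι * Fintype.card G) ≃ α :=
    Fintype.equivOfCardEq <| by
      simp only [Fintype.card_sum, Fintype.card_prod, Fintype.card_fin]; omega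
  refine ⟨fun a => E.permCongr (blockShift a), E.permCongr.injective.comp blockShift_injective,
    by simp only [blockShift_zero]; exact E.permCongr_refl, fun a b hab => ?_⟩
  rw [card_filter_permCongr_ne]
  convert card_le_card_filter_blockShift_ne hab

end Equiv.Perm

lemma Real.rpow_div_sub_one_le_pow_div {x : ℝ} (hx : 1 ≤ x) (n m : ℕ) :
    x ^ ((n : ℝ) / m - 1) ≤ x ^ (n / m) := by
  rw [← Real.rpow_natCast]
  refine Real.rpow_le_rpow_of_exponent_le hx ?_
  rw [← Nat.floor_div_eq_div (K := ℝ), sub_le_iff_le_add]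
  exact (Nat.lt_floor_add_one _).le

theorem separated_family_of_permutations_general (n k : ℕ) (hk : 0 < k) :
    ∃ S : Finset (Equiv.Perm (Fin n)),
      S.card = (2 * k) ^ (n / (2 * k + 1)) ∧
      ((2 * k : ℝ) : ℝ) ^ ((n : ℝ) / (2 * k + 1) - 1) ≤ ((2 * k : ℕ) : ℝ) ^ (n / (2 * k + 1)) ∧
      ∀ σ ∈ insert (1 : Equiv.Perm (Fin n)) S, ∀ τ ∈ insert (1 : Equiv.Perm (Fin n)) S,
        σ ≠ τ → 2 * k + 1 ≤ (Finset.univ.filter fun i => σ i ≠ τ i).card := by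
  obtain ⟨F, hF_inj, hF_zero, hF_sep⟩ :=
    Equiv.Perm.exists_injective_separated_of_card_mul_card_le (α := Fin n)
      (ι := Fin (n / (2 * k + 1))) (G := ZMod (2 * k + 1))
      (by simpa using Nat.div_mul_le_self n (2 * k + 1))
  refine ⟨(Fintype.piFinset fun _ => {0}ᶜ).image F, ?_, ?_, ?_⟩
  · rw [card_image_of_injective _ hF_inj, Fintype.card_piFinset]
    simp [card_compl]
  · have hx : (1 : ℝ) ≤ 2 * k := by norm_cast; omega
    simpa using Real.rpow_div_sub_one_le_pow_div hx n (2 * k + 1)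
  · intro σ hσ τ hτ hστ
    rw [← hF_zero, ← image_insert] at hσ hτ
    obtain ⟨a, -, rfl⟩ := mem_image.1 hσ
    obtain ⟨b, -, rfl⟩ := mem_image.1 hτ
    simpa using hF_sep a b (ne_of_apply_ne F hστ)

/-- For positive integers `n, k` with `2k+1 ≤ n` and `𝔫 = ⌊n/(2k+1)⌋`,
there is a set `S` of permutations of `{1,…,n}` with `|S| = (2k)^𝔫 ≥ (2k)^{n/(2k+1) - 1}`
such that any two distinct elements of `S ∪ {id}` disagree in at least `2k+1` positions. -/
theorem separated_family_of_permutations (n k : ℕ) (hk : 0 < k) (hkn : 2 * k + 1 ≤ n) :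
    ∃ S : Finset (Equiv.Perm (Fin n)),
      S.card = (2 * k) ^ (n / (2 * k + 1)) ∧
      ((2 * k : ℝ) : ℝ) ^ ((n : ℝ) / (2 * k + 1) - 1) ≤ ((2 * k : ℕ) : ℝ) ^ (n / (2 * k + 1)) ∧
      ∀ σ ∈ insert (1 : Equiv.Perm (Fin n)) S, ∀ τ ∈ insert (1 : Equiv.Perm (Fin n)) S,
        σ ≠ τ → 2 * k + 1 ≤ (Finset.univ.filter fun i => σ i ≠ τ i).card :=
  separated_family_of_permutations_general n k hk
end

section
/- Let n and k be positive integers with 2k+1 ≤ n, let p ∈ (0,1), and let A and B be the adjacency matrices of two independent ER(n,p) random graphs on the same vertex set {1,…,n}. Then P[every n×n permutation matrix Q maximizing Tr(A Q B Qᵀ) over all permutation matrices has at most k non-fixed points] ≤ (2k)^{1 − n/(2k+1)}. -/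
open scoped BigOperators
open scoped Classical
open Finset Matrix

/-! Relabelling the vertices of `B` by a permutation `π` preserves the law of `B` and turns the
event "every maximiser `σ` of `Tr(A σ B σᵀ)` moves at most `k` points" into "every maximiser is
within Hamming distance `k` of `π`". Since a maximiser always exists, these events are disjoint
for permutations at distance more than `2k`. Cutting the vertex set into `⌊n/(2k+1)⌋` blocks of
size `2k+1` and rotating each block independently gives `(2k+1)^⌊n/(2k+1)⌋` such permutations,
so the probability is at most `(2k+1)^(-⌊n/(2k+1)⌋) ≤ (2k)^(1 - n/(2k+1))`. -/

section Relabel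

variable {n : ℕ}

lemma permMat_mul_mul_transpose (σ : Equiv.Perm (Fin n)) (M : Matrix (Fin n) (Fin n) ℝ) :
    permMat σ * M * (permMat σ)ᵀ = M.submatrix σ σ := by
  ext i j
  simp [permMat, Matrix.mul_apply]

lemma gmObj_eq_trace_submatrix (c1 c2 : EConfig n) (σ : Equiv.Perm (Fin n)) :
    gmObj c1 c2 σ = trace (adjOf c1 * (adjOf c2).submatrix σ σ) := by
  rw [gmObj, ← permMat_mul_mul_transpose, Matrix.mul_assoc, Matrix.mul_assoc, Matrix.mul_assoc]

def pairPerm (π : Equiv.Perm (Fin n)) : Equiv.Perm (EPair n) where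
  toFun e := ⟨e.1.map π, fun h => e.2 ((Sym2.isDiag_map π.injective).mp h)⟩
  invFun e := ⟨e.1.map π.symm, fun h => e.2 ((Sym2.isDiag_map π.symm.injective).mp h)⟩
  left_inv e := Subtype.ext (by simp [Sym2.map_map])
  right_inv e := Subtype.ext (by simp [Sym2.map_map])

lemma pairPerm_mkEPair (π : Equiv.Perm (Fin n)) {u v : Fin n} (h : u ≠ v) :
    pairPerm π (mkEPair u v h) = mkEPair (π u) (π v) (π.injective.ne h) :=
  Subtype.ext (by simp [pairPerm, mkEPair])

def relabel (π : Equiv.Perm (Fin n)) : EConfig n ≃ EConfig n :=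
  (pairPerm π).symm.arrowCongr (Equiv.refl Bool)

lemma relabel_apply (π : Equiv.Perm (Fin n)) (c : EConfig n) (e : EPair n) :
    relabel π c e = c (pairPerm π e) := rfl

lemma adjOf_relabel (π : Equiv.Perm (Fin n)) (c : EConfig n) :
    adjOf (relabel π c) = (adjOf c).submatrix π π := by
  ext i j
  by_cases h : i = j
  · simp [adjOf, h]
  · simp [adjOf, h, relabel_apply, pairPerm_mkEPair]

lemma gmObj_relabel (π σ : Equiv.Perm (Fin n)) (c1 c2 : EConfig n) :
    gmObj c1 (relabel π c2) σ = gmObj c1 c2 (π * σ) := by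
  simp only [gmObj_eq_trace_submatrix, adjOf_relabel, Matrix.submatrix_submatrix,
    Equiv.Perm.coe_mul]

lemma erWeight_eq_prod (p : ℝ) (c : EConfig n) :
    erWeight n p c = ∏ e, if c e then p else 1 - p := by
  simp [erWeight, onCount, offCount, Finset.prod_ite]

lemma erWeight_relabel (p : ℝ) (π : Equiv.Perm (Fin n)) (c : EConfig n) :
    erWeight n p (relabel π c) = erWeight n p c := by
  simp only [erWeight_eq_prod, relabel_apply]
  exact Equiv.prod_comp (pairPerm π) fun e => if c e then p else 1 - p

lemma sum_erWeight (p : ℝ) : ∑ c : EConfig n, erWeight n p c = 1 := by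
  simp only [erWeight_eq_prod]
  rw [← Fintype.prod_sum (fun (_ : EPair n) (b : Bool) => if b then p else 1 - p)]
  simp

lemma erWeight_nonneg {p : ℝ} (hp0 : 0 ≤ p) (hp1 : p ≤ 1) (c : EConfig n) :
    0 ≤ erWeight n p c :=
  mul_nonneg (pow_nonneg hp0 _) (pow_nonneg (sub_nonneg.mpr hp1) _)

end Relabel

section Probability

variable {n : ℕ}

noncomputable def erProb (n : ℕ) (p : ℝ) (E : EConfig n → EConfig n → Prop) : ℝ :=
  ∑ c1 : EConfig n, ∑ c2 : EConfig n, if E c1 c2 then erWeight n p c1 * erWeight n p c2 else 0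

lemma erProb_relabel (p : ℝ) (π : Equiv.Perm (Fin n)) (E : EConfig n → EConfig n → Prop) :
    erProb n p (fun c1 c2 => E c1 (relabel π c2)) = erProb n p E := by
  refine Finset.sum_congr rfl fun c1 _ => ?_
  conv_rhs => rw [← (relabel π).sum_comp]
  simp only [erWeight_relabel]

lemma sum_erProb_le_one {ι : Type*} [Fintype ι] {p : ℝ} (hp0 : 0 ≤ p) (hp1 : p ≤ 1)
    (E : ι → EConfig n → EConfig n → Prop)
    (hE : ∀ c1 c2 i j, E i c1 c2 → E j c1 c2 → i = j) :
    ∑ i, erProb n p (E i) ≤ 1 := by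
  have hw := erWeight_nonneg (n := n) hp0 hp1
  have at_most_one : ∀ c1 c2,
      ∑ i, (if E i c1 c2 then erWeight n p c1 * erWeight n p c2 else 0)
        ≤ erWeight n p c1 * erWeight n p c2 := by
    intro c1 c2
    rw [Finset.sum_ite, Finset.sum_const_zero, add_zero, Finset.sum_const, nsmul_eq_mul]
    have : (Finset.univ.filter fun i => E i c1 c2).card ≤ 1 :=
      Finset.card_le_one.mpr fun i hi j hj => hE c1 c2 i j (by simpa using hi) (by simpa using hj)
    exact mul_le_of_le_one_left (mul_nonneg (hw c1) (hw c2)) (by exact_mod_cast this)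
  calc ∑ i, erProb n p (E i)
      = ∑ c1, ∑ c2, ∑ i, (if E i c1 c2 then erWeight n p c1 * erWeight n p c2 else 0) := by
        simp only [erProb]
        rw [Finset.sum_comm]
        exact Finset.sum_congr rfl fun c1 _ => Finset.sum_comm
    _ ≤ ∑ c1, ∑ c2, erWeight n p c1 * erWeight n p c2 :=
        Finset.sum_le_sum fun c1 _ => Finset.sum_le_sum fun c2 _ => at_most_one c1 c2
    _ = 1 := by simp only [← Finset.mul_sum, sum_erWeight, mul_one]

end Probability

section Maximizers

variable {n : ℕ}

def MaximizersMoveAtMost (k : ℕ) (c1 c2 : EConfig n) : Prop :=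
  ∀ σ : Equiv.Perm (Fin n),
    (∀ σ' : Equiv.Perm (Fin n), gmObj c1 c2 σ' ≤ gmObj c1 c2 σ) → nonfixed σ ≤ k

lemma nonfixed_eq_card_support (σ : Equiv.Perm (Fin n)) : nonfixed σ = σ.support.card := by
  unfold nonfixed Equiv.Perm.support
  congr 1

lemma card_support_inv_mul_le_of_maximizersMoveAtMost {k : ℕ} {π π' : Equiv.Perm (Fin n)}
    {c1 c2 : EConfig n} (h : MaximizersMoveAtMost k c1 (relabel π c2))
    (h' : MaximizersMoveAtMost k c1 (relabel π' c2)) :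
    (π⁻¹ * π').support.card ≤ 2 * k := by
  obtain ⟨τ, -, hτ⟩ := Finset.exists_max_image Finset.univ (gmObj c1 c2) Finset.univ_nonempty
  have near : ∀ ρ, MaximizersMoveAtMost k c1 (relabel ρ c2) → (ρ⁻¹ * τ).support.card ≤ k :=
    fun ρ hρ => nonfixed_eq_card_support _ ▸ hρ (ρ⁻¹ * τ) fun σ' => by
      simpa [gmObj_relabel] using hτ (ρ * σ') (Finset.mem_univ _)
  calc (π⁻¹ * π').support.card
      = ((π⁻¹ * τ) * (π'⁻¹ * τ)⁻¹).support.card := by group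
    _ ≤ (π⁻¹ * τ).support.card + (π'⁻¹ * τ)⁻¹.support.card :=
        (Finset.card_le_card (Equiv.Perm.support_mul_le _ _)).trans (Finset.card_union_le _ _)
    _ ≤ 2 * k := by rw [Equiv.Perm.support_inv]; linarith [near π h, near π' h']

end Maximizers

section BlockShift

variable {α β γ G : Type*} [AddGroup G]

def blockShift (e : α ≃ (β × G) ⊕ γ) (v : β → G) : Equiv.Perm α :=
  e.trans ((Equiv.sumCongr (Equiv.prodShear (Equiv.refl β) fun b => Equiv.addRight (v b))
    (Equiv.refl γ)).trans e.symm)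

lemma blockShift_apply (e : α ≃ (β × G) ⊕ γ) (v : β → G) (b : β) (x : G) :
    blockShift e v (e.symm (.inl (b, x))) = e.symm (.inl (b, x + v b)) := by
  simp [blockShift, Equiv.prodShear]

lemma card_le_card_support_blockShift_inv_mul [Fintype α] [DecidableEq α] [Fintype G]
    (e : α ≃ (β × G) ⊕ γ) {v w : β → G} (hvw : v ≠ w) :
    Fintype.card G ≤ ((blockShift e v)⁻¹ * blockShift e w).support.card := by
  obtain ⟨b, hb⟩ := Function.ne_iff.mp hvw
  let block : G ↪ α := ⟨fun x => e.symm (.inl (b, x)), fun x y hxy => by simpa using hxy⟩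
  calc Fintype.card G = (Finset.univ.map block).card := by simp
    _ ≤ _ := Finset.card_le_card fun y hy => by
      obtain ⟨x, -, rfl⟩ := Finset.mem_map.mp hy
      rw [Equiv.Perm.mem_support, Equiv.Perm.mul_apply, Ne, Equiv.Perm.inv_eq_iff_eq]
      change blockShift e w (e.symm (.inl (b, x))) ≠ blockShift e v (e.symm (.inl (b, x)))
      simpa [blockShift_apply] using hb.symm

end BlockShift

lemma inv_pow_div_le_rpow {a : ℝ} {n r : ℕ} (ha : 1 ≤ a) (har : a ≤ r) :
    ((r : ℝ) ^ (n / r))⁻¹ ≤ a ^ (1 - (n : ℝ) / r) := by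
  have hr : (0 : ℝ) < r := by linarith
  have hexp : (n : ℝ) / r - 1 ≤ (n / r : ℕ) := by
    have := Nat.lt_floor_add_one ((n : ℝ) / r)
    rw [Nat.floor_div_eq_div] at this
    linarith
  rw [show 1 - (n : ℝ) / r = -((n : ℝ) / r - 1) by ring, Real.rpow_neg (by linarith)]
  refine inv_anti₀ (Real.rpow_pos_of_pos (by linarith) _) ?_
  calc a ^ ((n : ℝ) / r - 1) ≤ a ^ ((n / r : ℕ) : ℝ) := Real.rpow_le_rpow_of_exponent_le ha hexp
    _ = a ^ (n / r) := Real.rpow_natCast _ _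
    _ ≤ (r : ℝ) ^ (n / r) := pow_le_pow_left₀ (by linarith) har _

theorem independent_ER_anonymized_general (n k : ℕ) (hk : 0 < k) (p : ℝ) (hp : p ∈ Set.Ioo (0 : ℝ) 1) :
    (∑ c1 : EConfig n, ∑ c2 : EConfig n,
        if ∀ σ : Equiv.Perm (Fin n),
            (∀ σ' : Equiv.Perm (Fin n), gmObj c1 c2 σ' ≤ gmObj c1 c2 σ) →
            nonfixed σ ≤ k
        then erWeight n p c1 * erWeight n p c2 else 0)
      ≤ (2 * (k : ℝ)) ^ ((1 : ℝ) - (n : ℝ) / (2 * (k : ℝ) + 1)) := by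
  set r := 2 * k + 1
  obtain ⟨e⟩ : Nonempty (Fin n ≃ (Fin (n / r) × Fin r) ⊕ Fin (n - n / r * r)) :=
    ⟨Fintype.equivOfCardEq (by simp [Nat.add_sub_cancel' (Nat.div_mul_le_self n r)])⟩
  have disjoint : ∀ c1 c2 (v w : Fin (n / r) → Fin r),
      MaximizersMoveAtMost k c1 (relabel (blockShift e v) c2) →
      MaximizersMoveAtMost k c1 (relabel (blockShift e w) c2) → v = w := fun c1 c2 v w hv hw => by
    by_contra hvw
    have far := card_le_card_support_blockShift_inv_mul e hvw
    have near := card_support_inv_mul_le_of_maximizersMoveAtMost hv hw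
    rw [Fintype.card_fin] at far
    omega
  have hsum := sum_erProb_le_one hp.1.le hp.2.le _ disjoint
  simp only [erProb_relabel, Finset.sum_const, Finset.card_univ, Fintype.card_fun,
    Fintype.card_fin, nsmul_eq_mul] at hsum
  have hbound := inv_pow_div_le_rpow (n := n) (r := r) (a := 2 * k)
    (by norm_cast; omega) (by simp [r])
  -- not `rfl`: the two `if`s carry different `Decidable` instances
  calc _ = erProb n p (MaximizersMoveAtMost k) := by unfold erProb MaximizersMoveAtMost; congr!
    _ ≤ ((r : ℝ) ^ (n / r))⁻¹ := by
        rw [← mul_one ((r : ℝ) ^ (n / r))⁻¹, le_inv_mul_iff₀ (by positivity)]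
        exact_mod_cast hsum
    _ ≤ _ := by simpa [r] using hbound

/-- For two independent `ER(n,p)` graphs `A, B` on the same `n` vertices
and `2k+1 ≤ n`, the probability that every maximizer of `Tr(A Q B Qᵀ)` over permutation
matrices has at most `k` non-fixed points is at most `(2k)^{1 - n/(2k+1)}`. -/
theorem independent_ER_anonymized (n k : ℕ) (hn : 0 < n) (hk : 0 < k)
    (hkn : 2 * k + 1 ≤ n) (p : ℝ) (hp : p ∈ Set.Ioo (0 : ℝ) 1) :
    (∑ c1 : EConfig n, ∑ c2 : EConfig n,
        if ∀ σ : Equiv.Perm (Fin n),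
            (∀ σ' : Equiv.Perm (Fin n), gmObj c1 c2 σ' ≤ gmObj c1 c2 σ) →
            nonfixed σ ≤ k
        then erWeight n p c1 * erWeight n p c2 else 0)
      ≤ (2 * (k : ℝ)) ^ ((1 : ℝ) - (n : ℝ) / (2 * (k : ℝ) + 1)) :=
  independent_ER_anonymized_general n k hk p hp
end

section
/- Let P be a stochastic matrix (the one-step transition matrix of a Markov chain) on a finite state space S and let η be a probability distribution on S. Define d̄(t, η) = max_{y ∈ S} ||η P^t − P^t(y,·)||_TV and d̄(t) = max_{x,y ∈ S} ||P^t(x,·) − P^t(y,·)||_TV, where || · ||_TV is total variation distance. Then for all integers s, t ≥ 0, d̄(s + t, η) ≤ d̄(s, η) · d̄(t). -/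
open scoped BigOperators
open scoped Classical
open Finset

/-- Distribution at time `t` of the chain with kernel `P` started from `η`. -/
noncomputable def fromDist {S : Type*} [Fintype S] (P : S → S → ℝ) (η : S → ℝ)
    (t : ℕ) : S → ℝ :=
  fun z => ∑ x : S, η x * kPow P t x z

/-- `d̄(t, η) = max_y ‖η Pᵗ − Pᵗ(y,·)‖_TV`. -/
noncomputable def dbarFrom {S : Type*} [Fintype S] (P : S → S → ℝ) (η : S → ℝ)
    (t : ℕ) : ℝ :=
  ⨆ y : S, tvDist (fromDist P η t) (kPow P t y)

/-- `d̄(t) = max_{x,y} ‖Pᵗ(x,·) − Pᵗ(y,·)‖_TV`. -/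
noncomputable def dbar {S : Type*} [Fintype S] (P : S → S → ℝ) (t : ℕ) : ℝ :=
  ⨆ pr : S × S, tvDist (kPow P t pr.1) (kPow P t pr.2)

/-!
With `f = ηPˢ − Pˢ(y,·)` one has `ηPˢ⁺ᵗ − Pˢ⁺ᵗ(y,·) = f Pᵗ`, so it suffices that every kernel `K`
contracts signed measures of total mass zero:
`‖f K‖_TV ≤ ‖f‖_TV · max_{x,x'} ‖K(x,·) − K(x',·)‖_TV`.
Both parts of `f = f⁺ − f⁻` have mass `c = ‖f‖_TV`, and
`c · f K = ∑_{x,x'} f⁺(x) f⁻(x') (K(x,·) − K(x',·))` couples them, so the bound follows from the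
triangle inequality.
-/

section TotalVariation

variable {S T : Type*} [Fintype S]

theorem mul_sum_sub_mul_eq_sum_sum (p q g : S → ℝ) (hpq : ∑ x, q x = ∑ x, p x) :
    (∑ x, p x) * ∑ x, (p x - q x) * g x = ∑ x, ∑ x', p x * q x' * (g x - g x') := by
  calc (∑ x, p x) * ∑ x, (p x - q x) * g x
      = (∑ x, p x * g x) * ∑ x', q x' - (∑ x, p x) * ∑ x', q x' * g x' := by
        simp only [sub_mul, Finset.sum_sub_distrib, hpq]
        ring
    _ = ∑ x, ∑ x', (p x * g x * q x' - p x * (q x' * g x')) := by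
        simp only [Finset.sum_mul_sum, Finset.sum_sub_distrib]
    _ = ∑ x, ∑ x', p x * q x' * (g x - g x') := by
        congr! 2 with x _ x' _
        ring

theorem sum_negPart_eq_sum_posPart {f : S → ℝ} (hf : ∑ x, f x = 0) :
    ∑ x, (f x)⁻ = ∑ x, (f x)⁺ := by
  have : ∑ x, ((f x)⁺ - (f x)⁻) = 0 := by simpa only [posPart_sub_negPart] using hf
  rw [Finset.sum_sub_distrib] at this
  linarith

theorem sum_abs_eq_two_mul_sum_posPart {f : S → ℝ} (hf : ∑ x, f x = 0) :
    ∑ x, |f x| = 2 * ∑ x, (f x)⁺ := by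
  simp only [← posPart_add_negPart, Finset.sum_add_distrib, sum_negPart_eq_sum_posPart hf]
  ring

theorem sum_posPart_mul_abs_sum_mul_le {f : S → ℝ} (hf : ∑ x, f x = 0) (K : S → T → ℝ) (z : T) :
    (∑ x, (f x)⁺) * |∑ x, f x * K x z| ≤ ∑ x, ∑ x', (f x)⁺ * (f x')⁻ * |K x z - K x' z| := by
  have hc : 0 ≤ ∑ x, (f x)⁺ := Finset.sum_nonneg fun x _ => posPart_nonneg (f x)
  calc (∑ x, (f x)⁺) * |∑ x, f x * K x z|
      = |∑ x, ∑ x', (f x)⁺ * (f x')⁻ * (K x z - K x' z)| := by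
        rw [← mul_sum_sub_mul_eq_sum_sum _ _ _ (sum_negPart_eq_sum_posPart hf), abs_mul,
          abs_of_nonneg hc]
        simp only [posPart_sub_negPart]
    _ ≤ ∑ x, ∑ x', (f x)⁺ * (f x')⁻ * |K x z - K x' z| := by
        refine (Finset.abs_sum_le_sum_abs _ _).trans (Finset.sum_le_sum fun x _ => ?_)
        refine (Finset.abs_sum_le_sum_abs _ _).trans (Finset.sum_le_sum fun x' _ => ?_)
        rw [abs_mul, abs_of_nonneg (mul_nonneg (posPart_nonneg _) (negPart_nonneg _))]

theorem sum_abs_sum_mul_le_of_sum_eq_zero [Fintype T] (K : S → T → ℝ) {f : S → ℝ}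
    (hf : ∑ x, f x = 0) {D : ℝ} (hK : ∀ x x', ∑ z, |K x z - K x' z| ≤ D) :
    ∑ z, |∑ x, f x * K x z| ≤ (∑ x, |f x|) / 2 * D := by
  set c := ∑ x, (f x)⁺ with hc_def
  have hc0 : 0 ≤ c := Finset.sum_nonneg fun x _ => posPart_nonneg (f x)
  rw [sum_abs_eq_two_mul_sum_posPart hf, ← hc_def]
  obtain hc | hc := hc0.eq_or_lt
  · have hf0 : ∀ x, f x = 0 := fun x => abs_eq_zero.mp <|
      (Finset.sum_eq_zero_iff_of_nonneg fun x _ => abs_nonneg (f x)).mp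
        (by rw [sum_abs_eq_two_mul_sum_posPart hf, ← hc_def, ← hc, mul_zero]) x (Finset.mem_univ x)
    simp [hf0, ← hc]
  have hsum : c * ∑ z, |∑ x, f x * K x z| ≤ c * (c * D) := by
    calc c * ∑ z, |∑ x, f x * K x z|
        ≤ ∑ z, ∑ x, ∑ x', (f x)⁺ * (f x')⁻ * |K x z - K x' z| := by
          rw [Finset.mul_sum]
          exact Finset.sum_le_sum fun z _ => sum_posPart_mul_abs_sum_mul_le hf K z
      _ = ∑ x, ∑ x', (f x)⁺ * (f x')⁻ * ∑ z, |K x z - K x' z| := by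
          rw [Finset.sum_comm]
          refine Finset.sum_congr rfl fun x _ => ?_
          rw [Finset.sum_comm]
          simp only [Finset.mul_sum]
      _ ≤ ∑ x, ∑ x', (f x)⁺ * (f x')⁻ * D := by
          gcongr with x _ x' _
          exact hK x x'
      _ = c * (c * D) := by
          simp only [mul_assoc, ← Finset.sum_mul_sum, ← Finset.sum_mul,
            sum_negPart_eq_sum_posPart hf, hc_def]
  nlinarith [le_of_mul_le_mul_left hsum hc]

theorem tvDist_sum_mul_le [Fintype T] {μ ν : S → ℝ} (hμν : ∑ x, μ x = ∑ x, ν x)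
    (K : S → T → ℝ) {D : ℝ}
    (hK : ∀ x x', tvDist (K x) (K x') ≤ D) :
    tvDist (fun z => ∑ x, μ x * K x z) (fun z => ∑ x, ν x * K x z) ≤ tvDist μ ν * D := by
  have hf : ∑ x, (μ x - ν x) = 0 := by rw [Finset.sum_sub_distrib, hμν, sub_self]
  have hK' : ∀ x x', ∑ z, |K x z - K x' z| ≤ 2 * D := fun x x' => by
    have := hK x x'
    rw [tvDist] at this
    linarith
  have := sum_abs_sum_mul_le_of_sum_eq_zero K hf hK'
  simp only [tvDist, ← Finset.sum_sub_distrib, ← sub_mul]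
  linarith

end TotalVariation

section MarkovChain

variable {S : Type*} [Fintype S] (P : S → S → ℝ)

theorem kPow_eq_pow (t : ℕ) : kPow P t = Matrix.of P ^ t := by
  induction t with
  | zero => ext x y; simp [kPow, Matrix.one_apply]
  | succ t ih => ext x y; simp [kPow, pow_succ, Matrix.mul_apply, ih]

theorem kPow_add (s t : ℕ) (x z : S) :
    kPow P (s + t) x z = ∑ w, kPow P s x w * kPow P t w z := by
  simp only [kPow_eq_pow, pow_add, Matrix.mul_apply]

theorem fromDist_add (η : S → ℝ) (s t : ℕ) (z : S) :
    fromDist P η (s + t) z = ∑ x, fromDist P η s x * kPow P t x z := by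
  simp only [fromDist, kPow_add, Finset.mul_sum, Finset.sum_mul, mul_assoc]
  exact Finset.sum_comm

variable {P}

theorem sum_kPow (hP1 : ∀ x, ∑ y, P x y = 1) (t : ℕ) (x : S) : ∑ y, kPow P t x y = 1 := by
  induction t with
  | zero => simp [kPow]
  | succ t ih =>
    simp only [kPow]
    rw [Finset.sum_comm]
    simp only [← Finset.mul_sum, hP1, mul_one, ih]

theorem sum_fromDist (hP1 : ∀ x, ∑ y, P x y = 1) {η : S → ℝ} (hη1 : ∑ x, η x = 1) (t : ℕ) :
    ∑ z, fromDist P η t z = 1 := by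
  simp only [fromDist]
  rw [Finset.sum_comm]
  simp only [← Finset.mul_sum, sum_kPow hP1, mul_one, hη1]

end MarkovChain

section Dbar

variable {S : Type*} [Fintype S]

theorem tvDist_nonneg (μ ν : S → ℝ) : 0 ≤ tvDist μ ν := by
  unfold tvDist
  positivity

variable (P : S → S → ℝ)

theorem tvDist_le_dbar (t : ℕ) (x y : S) : tvDist (kPow P t x) (kPow P t y) ≤ dbar P t :=
  le_ciSup (f := fun pr : S × S => tvDist (kPow P t pr.1) (kPow P t pr.2))
    (Finite.bddAbove_range _) (x, y)

theorem tvDist_le_dbarFrom (η : S → ℝ) (t : ℕ) (y : S) :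
    tvDist (fromDist P η t) (kPow P t y) ≤ dbarFrom P η t :=
  le_ciSup (f := fun y => tvDist (fromDist P η t) (kPow P t y)) (Finite.bddAbove_range _) y

theorem dbar_nonneg (t : ℕ) : 0 ≤ dbar P t :=
  Real.iSup_nonneg fun _ => tvDist_nonneg _ _

theorem dbarFrom_nonneg (η : S → ℝ) (t : ℕ) : 0 ≤ dbarFrom P η t :=
  Real.iSup_nonneg fun _ => tvDist_nonneg _ _

end Dbar

theorem dbar_submultiplicative_general {S : Type*} [Fintype S]
    (P : S → S → ℝ) (hP1 : ∀ x, ∑ y : S, P x y = 1)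
    (η : S → ℝ) (hη1 : ∑ x : S, η x = 1) (s t : ℕ) :
    dbarFrom P η (s + t) ≤ dbarFrom P η s * dbar P t := by
  refine Real.iSup_le (fun y => ?_) (mul_nonneg (dbarFrom_nonneg P η s) (dbar_nonneg P t))
  have hmass : ∑ x, fromDist P η s x = ∑ x, kPow P s y x := by
    rw [sum_fromDist hP1 hη1, sum_kPow hP1]
  calc tvDist (fromDist P η (s + t)) (kPow P (s + t) y)
      = tvDist (fun z => ∑ x, fromDist P η s x * kPow P t x z)
          (fun z => ∑ x, kPow P s y x * kPow P t x z) := by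
        simp only [funext (fromDist_add P η s t), funext (kPow_add P s t y)]
    _ ≤ tvDist (fromDist P η s) (kPow P s y) * dbar P t :=
        tvDist_sum_mul_le hmass _ (tvDist_le_dbar P t)
    _ ≤ dbarFrom P η s * dbar P t :=
        mul_le_mul_of_nonneg_right (tvDist_le_dbarFrom P η s y) (dbar_nonneg P t)

/-- For a stochastic matrix `P` on a finite state space and a probability
distribution `η`, the quantity `d̄(t, η)` is submultiplicative:
`d̄(s + t, η) ≤ d̄(s, η) · d̄(t)`. -/
theorem dbar_submultiplicative {S : Type*} [Fintype S] [Nonempty S]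
    (P : S → S → ℝ) (hP0 : ∀ x y, 0 ≤ P x y) (hP1 : ∀ x, ∑ y : S, P x y = 1)
    (η : S → ℝ) (hη0 : ∀ x, 0 ≤ η x) (hη1 : ∑ x : S, η x = 1) (s t : ℕ) :
    dbarFrom P η (s + t) ≤ dbarFrom P η s * dbar P t :=
  dbar_submultiplicative_general P hP1 η hη1 s t
end
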